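/- arXiv:1706.03111 — 5 statements merged into one kernel-verified Lean document; each statement's English description precedes it below -/
import Mathlib

section
/- Let ε > 0, let ψ be a Schwartz function on ℝ satisfying −(ε²/2)ψ''(x) + (x²/2)ψ(x) = λ·ψ(x) for all x and some λ ∈ ℝ, and let φ be any Schwartz function on ℝ. Then Ψ = W^ε_φ[ψ] satisfies the phase-space eigenvalue equation of the Moyal star product H ⋆ Ψ = λΨ for the harmonic oscillator Hamiltonian H(x,p) = (x² + p²)/2, namely: for all (x,p) ∈ ℝ², ((x² + p²)/2)·Ψ(x,p) − (ε²/8)·(∂²Ψ/∂x² + ∂²Ψ/∂p²)(x,p) + (iε/2)·(x·∂Ψ/∂p − p·∂Ψ/∂x)(x,p) = λ·Ψ(x,p). -/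
/-!
Write `W = W^ε_φ[ψ]` and `X`, `D` for multiplication by the position and for `d/dx` on
Schwartz space. The Moyal product `H ⋆ ·` is `½ (A² + B²)` for the Bopp shifts
`A = x + (iε/2) ∂_p` and `B = p - (iε/2) ∂_x`, and these act on cross-Wigner transforms
through the first argument: `A W^ε_g[f] = W^ε_g[X f]` and `B W^ε_g[f] = -iε W^ε_g[D f]`.
In Fourier form, `W^ε_g[f](x, p)` is the Fourier transform of
`y ↦ f (x + y/2) * conj (g (x - y/2))` at `p / (2πε)`. The identity for `A` is the rule that
the frequency derivative of a Fourier transform multiplies by `y = 2 ((x + y/2) - x)`. The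
identity for `B` comes from differentiating under the integral sign in `x` and integrating by
parts in `y` to move the derivative off `g`. Hence `H ⋆ W = W^ε_φ[½ X² ψ - ½ ε² D² ψ] = λ W`.
-/

open MeasureTheory

/-- The semiclassical cross-Wigner transform
`W^ε_g[f](x,p) = (2πε)⁻¹ ∫ e^{−ipy/ε} f(x+y/2) conj(g(x−y/2)) dy`. -/
noncomputable def crossWigner (ε : ℝ) (f g : ℝ → ℂ) (x p : ℝ) : ℂ :=
  ((2 * Real.pi * ε : ℝ) : ℂ)⁻¹ *
    ∫ y : ℝ, Complex.exp (-Complex.I * (p : ℂ) * (y : ℂ) / (ε : ℂ)) *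
      f (x + y / 2) * (starRingEnd ℂ) (g (x - y / 2))

open Complex ComplexConjugate SchwartzMap
open scoped FourierTransform Real

noncomputable def wignerProduct (f g : ℝ → ℂ) (x y : ℝ) : ℂ :=
  f (x + y / 2) * conj (g (x - y / 2))

theorem crossWigner_eq_fourier (ε : ℝ) (f g : ℝ → ℂ) (x p : ℝ) :
    crossWigner ε f g x p =
      ((2 * π * ε : ℝ) : ℂ)⁻¹ * 𝓕 (wignerProduct f g x) (p / (2 * π * ε)) := by
  rw [crossWigner, Real.fourier_real_eq_integral_exp_smul]
  congr 1
  refine integral_congr_ae (.of_forall fun y => ?_)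
  rcases eq_or_ne ε 0 with rfl | hε
  · simp [wignerProduct, mul_assoc]
  · simp only [wignerProduct, smul_eq_mul, mul_assoc]
    congr 2
    push_cast
    field_simp

theorem wignerProduct_add_left (f₁ f₂ g : ℝ → ℂ) (x : ℝ) :
    wignerProduct (f₁ + f₂) g x = wignerProduct f₁ g x + wignerProduct f₂ g x := by
  ext y
  simp [wignerProduct, add_mul]

theorem wignerProduct_smul_left (c : ℂ) (f g : ℝ → ℂ) (x : ℝ) :
    wignerProduct (c • f) g x = c • wignerProduct f g x := by
  ext y
  simp [wignerProduct, mul_assoc]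

theorem fourier_add_apply {u v : ℝ → ℂ} (hu : Integrable u) (hv : Integrable v) (ξ : ℝ) :
    𝓕 (u + v) ξ = 𝓕 u ξ + 𝓕 v ξ :=
  congrFun (VectorFourier.fourierIntegral_add Real.continuous_fourierChar (by fun_prop) hu hv) ξ

theorem fourier_smul_apply (c : ℂ) (u : ℝ → ℂ) (ξ : ℝ) : 𝓕 (c • u) ξ = c * 𝓕 u ξ :=
  congrFun (VectorFourier.fourierIntegral_const_smul _ _ _ u c) ξ

theorem iteratedDeriv_two_eq_of_hasDerivAt {𝕜 E : Type*} [NontriviallyNormedField 𝕜]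
    [NormedAddCommGroup E] [NormedSpace 𝕜 E] {F F' : 𝕜 → E} {F'' : E} {t : 𝕜}
    (h₁ : ∀ s, HasDerivAt F (F' s) s) (h₂ : HasDerivAt F' F'' t) :
    iteratedDeriv 2 F t = F'' := by
  rw [iteratedDeriv_succ, iteratedDeriv_one, funext fun s => (h₁ s).deriv, h₂.deriv]

namespace SchwartzMap

theorem exists_norm_le_inv_one_add_sq_of_abs_sub_le_one (f : 𝓢(ℝ, ℂ)) :
    ∃ C, ∀ s t : ℝ, |t - s| ≤ 1 → ‖f t‖ ≤ C * (1 + s ^ 2)⁻¹ := by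
  refine ⟨3 * (SchwartzMap.seminorm ℝ 0 0 f + SchwartzMap.seminorm ℝ 2 0 f), fun s t hts => ?_⟩
  have h₀ := f.norm_le_seminorm ℝ t
  have h₂ := f.norm_pow_mul_le_seminorm ℝ 2 t
  rw [Real.norm_eq_abs, sq_abs] at h₂
  have hst : (t - s) ^ 2 ≤ 1 := by nlinarith [abs_nonneg (t - s), sq_abs (t - s)]
  have hs : s ^ 2 ≤ 2 * t ^ 2 + 2 := by nlinarith [sq_nonneg (2 * t - s)]
  rw [← div_eq_mul_inv, le_div_iff₀ (by positivity)]
  nlinarith [mul_le_mul_of_nonneg_left hs (norm_nonneg (f t)),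
    apply_nonneg (SchwartzMap.seminorm ℝ 2 0) f]

noncomputable def positionCLM : 𝓢(ℝ, ℂ) →L[ℂ] 𝓢(ℝ, ℂ) := smulLeftCLM ℂ ((↑) : ℝ → ℂ)

@[simp]
theorem positionCLM_apply (f : 𝓢(ℝ, ℂ)) (t : ℝ) : positionCLM f t = t * f t :=
  smulLeftCLM_apply_apply (by fun_prop) f t

theorem coe_derivCLM (f : 𝓢(ℝ, ℂ)) : ⇑(derivCLM ℝ ℂ f) = deriv ⇑f :=
  funext (derivCLM_apply ℝ f)

end SchwartzMap

section WignerProduct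

variable (f g : 𝓢(ℝ, ℂ))

theorem integrable_wignerProduct (x : ℝ) : Integrable (wignerProduct f g x) := by
  refine ((f.integrable.comp_add_left x).comp_div two_ne_zero).mul_bdd
    (by fun_prop) (.of_forall fun y => ?_) (c := SchwartzMap.seminorm ℝ 0 0 g)
  rw [RCLike.norm_conj]
  exact g.norm_le_seminorm ℝ _

theorem exists_norm_wignerProduct_le (x₀ : ℝ) :
    ∃ C, ∀ x y : ℝ, |x - x₀| ≤ 1 →
      ‖wignerProduct f g x y‖ ≤ C * (1 + (x₀ + y / 2) ^ 2)⁻¹ := by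
  obtain ⟨C, hC⟩ := f.exists_norm_le_inv_one_add_sq_of_abs_sub_le_one
  refine ⟨C * SchwartzMap.seminorm ℝ 0 0 g, fun x y hx => ?_⟩
  have hf := hC (x₀ + y / 2) (x + y / 2) (by rwa [add_sub_add_right_eq_sub])
  rw [wignerProduct, norm_mul, RCLike.norm_conj, mul_right_comm]
  exact mul_le_mul hf (g.norm_le_seminorm ℝ _) (norm_nonneg _) ((norm_nonneg _).trans hf)

theorem hasDerivAt_wignerProduct_midpoint (x y : ℝ) :
    HasDerivAt (fun x => wignerProduct f g x y)
      (wignerProduct (derivCLM ℝ ℂ f) g x y + wignerProduct f (derivCLM ℝ ℂ g) x y) x := by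
  have hf := f.differentiableAt.hasDerivAt.scomp x ((hasDerivAt_id' x).add_const (y / 2))
  have hg := g.differentiableAt.hasDerivAt.scomp x ((hasDerivAt_id' x).sub_const (y / 2))
  refine (hf.mul hg.star).congr_deriv ?_
  simp [wignerProduct]

theorem hasDerivAt_wignerProduct_offset (x y : ℝ) :
    HasDerivAt (wignerProduct f g x)
      (2⁻¹ * (wignerProduct (derivCLM ℝ ℂ f) g x y - wignerProduct f (derivCLM ℝ ℂ g) x y)) y := by
  have hf := f.differentiableAt.hasDerivAt.scomp y (((hasDerivAt_id' y).div_const 2).const_add x)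
  have hg := g.differentiableAt.hasDerivAt.scomp y (((hasDerivAt_id' y).div_const 2).const_sub x)
  refine (hf.mul hg.star).congr_deriv ?_
  simp only [one_div, real_smul, ofReal_inv, ofReal_ofNat, Function.comp_apply, RCLike.star_def,
    neg_smul, star_neg, star_mul', star_inv₀, star_ofNat, mul_neg, wignerProduct, derivCLM_apply]
  ring

theorem hasDerivAt_fourier_wignerProduct_midpoint (ξ x₀ : ℝ) :
    HasDerivAt (fun x => 𝓕 (wignerProduct f g x) ξ)
      (𝓕 (wignerProduct (derivCLM ℝ ℂ f) g x₀) ξ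
        + 𝓕 (wignerProduct f (derivCLM ℝ ℂ g) x₀) ξ) x₀ := by
  obtain ⟨C₁, hC₁⟩ := exists_norm_wignerProduct_le (derivCLM ℝ ℂ f) g x₀
  obtain ⟨C₂, hC₂⟩ := exists_norm_wignerProduct_le f (derivCLM ℝ ℂ g) x₀
  have hint (u v : 𝓢(ℝ, ℂ)) (x : ℝ) :=
    (Real.fourierIntegral_convergent_iff ξ).2 (integrable_wignerProduct u v x)
  rw [← fourier_add_apply (integrable_wignerProduct _ _ _) (integrable_wignerProduct _ _ _)]
  simp only [Real.fourier_eq]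
  refine (hasDerivAt_integral_of_dominated_loc_of_deriv_le (Metric.closedBall_mem_nhds x₀ one_pos)
    (F' := fun x y => 𝐞 (-inner ℝ y ξ) •
      (wignerProduct (derivCLM ℝ ℂ f) g x + wignerProduct f (derivCLM ℝ ℂ g) x) y)
    (bound := fun y => (C₁ + C₂) * (1 + (x₀ + y / 2) ^ 2)⁻¹) ?_ (hint f g x₀) ?_ ?_ ?_ ?_).2
  · exact .of_forall fun x => (hint f g x).aestronglyMeasurable
  · simp only [Pi.add_apply, smul_add]
    exact ((hint _ _ x₀).add (hint _ _ x₀)).aestronglyMeasurable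
  · refine .of_forall fun y x hx => ?_
    rw [Metric.mem_closedBall, Real.dist_eq] at hx
    rw [Circle.norm_smul, add_mul]
    exact (norm_add_le _ _).trans (add_le_add (hC₁ x y hx) (hC₂ x y hx))
  · exact ((integrable_inv_one_add_sq.comp_add_left x₀).comp_div two_ne_zero).const_mul _
  · exact .of_forall fun y x _ => (hasDerivAt_wignerProduct_midpoint f g x y).const_smul _

theorem fourier_wignerProduct_derivCLM_left (x ξ : ℝ) :
    𝓕 (wignerProduct (derivCLM ℝ ℂ f) g x) ξ
      = 𝓕 (wignerProduct f (derivCLM ℝ ℂ g) x) ξ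
        + 4 * π * I * ξ * 𝓕 (wignerProduct f g x) ξ := by
  have hderiv : deriv (wignerProduct f g x) = fun y =>
      2⁻¹ * (wignerProduct (derivCLM ℝ ℂ f) g x y - wignerProduct f (derivCLM ℝ ℂ g) x y) :=
    funext fun y => (hasDerivAt_wignerProduct_offset f g x y).deriv
  have hint : Integrable (deriv (wignerProduct f g x)) := by
    rw [hderiv]
    exact ((integrable_wignerProduct _ _ _).sub (integrable_wignerProduct _ _ _)).const_mul _
  have hsplit : wignerProduct (derivCLM ℝ ℂ f) g x
      = wignerProduct f (derivCLM ℝ ℂ g) x + (2 : ℂ) • deriv (wignerProduct f g x) := by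
    rw [hderiv]
    ext y
    simp only [Pi.add_apply, Pi.smul_apply, smul_eq_mul]
    ring
  rw [hsplit, fourier_add_apply (integrable_wignerProduct _ _ _) (hint.smul _), fourier_smul_apply,
    Real.fourier_deriv (integrable_wignerProduct f g x)
      (fun y => (hasDerivAt_wignerProduct_offset f g x y).differentiableAt) hint]
  simp only [smul_eq_mul]
  ring

theorem hasDerivAt_fourier_wignerProduct_freq (x ξ : ℝ) :
    HasDerivAt (fun ξ => 𝓕 (wignerProduct f g x) ξ)
      (-4 * π * I * 𝓕 (wignerProduct (positionCLM f - (x : ℂ) • f : 𝓢(ℝ, ℂ)) g x) ξ) ξ := by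
  have hmul : (fun y : ℝ => y • wignerProduct f g x y)
      = (2 : ℂ) • wignerProduct (positionCLM f - (x : ℂ) • f : 𝓢(ℝ, ℂ)) g x := by
    ext y
    simp only [wignerProduct, real_smul, Pi.smul_apply, sub_apply, smul_apply, positionCLM_apply,
      ofReal_add, ofReal_div, ofReal_ofNat, smul_eq_mul]
    ring
  have hint : Integrable (fun y : ℝ => y • wignerProduct f g x y) := by
    rw [hmul]
    exact (integrable_wignerProduct _ g x).smul _
  refine (Real.hasDerivAt_fourier (integrable_wignerProduct f g x) hint ξ).congr_deriv ?_
  have hscale : (fun y : ℝ => (-2 * π * I * y) • wignerProduct f g x y)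
      = (-2 * π * I : ℂ) • fun y : ℝ => y • wignerProduct f g x y := by
    ext y
    simp only [Pi.smul_apply, smul_eq_mul, real_smul]
    ring
  rw [hscale, hmul, smul_smul, fourier_smul_apply]
  ring

end WignerProduct

noncomputable def crossWignerₗ (ε : ℝ) (g : 𝓢(ℝ, ℂ)) (x p : ℝ) : 𝓢(ℝ, ℂ) →ₗ[ℂ] ℂ where
  toFun f := crossWigner ε f g x p
  map_add' f₁ f₂ := by
    simp only [crossWigner_eq_fourier, FunLike.coe_add, wignerProduct_add_left, ← mul_add,
      fourier_add_apply (integrable_wignerProduct _ _ _) (integrable_wignerProduct _ _ _)]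
  map_smul' c f := by
    simp only [crossWigner_eq_fourier, FunLike.coe_smul, wignerProduct_smul_left,
      fourier_smul_apply, RingHom.id_apply, smul_eq_mul]
    ring

theorem crossWignerₗ_apply (ε : ℝ) (f g : 𝓢(ℝ, ℂ)) (x p : ℝ) :
    crossWignerₗ ε g x p f = crossWigner ε f g x p := rfl

theorem hasDerivAt_crossWigner_position {ε : ℝ} (hε : ε ≠ 0) (f g : 𝓢(ℝ, ℂ)) (x p : ℝ) :
    HasDerivAt (fun x => crossWigner ε f g x p)
      (2 * crossWigner ε (derivCLM ℝ ℂ f) g x p - 2 * I * p / ε * crossWigner ε f g x p) x := by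
  simp only [crossWigner_eq_fourier]
  refine ((hasDerivAt_fourier_wignerProduct_midpoint f g _ x).const_mul _).congr_deriv ?_
  rw [fourier_wignerProduct_derivCLM_left f g]
  have : (ε : ℂ) ≠ 0 := by exact_mod_cast hε
  push_cast
  field_simp
  ring

theorem hasDerivAt_crossWigner_momentum {ε : ℝ} (hε : ε ≠ 0) (f g : 𝓢(ℝ, ℂ)) (x p : ℝ) :
    HasDerivAt (fun p => crossWigner ε f g x p)
      (-2 * I / ε * (crossWigner ε (positionCLM f) g x p - x * crossWigner ε f g x p)) p := by
  have hV := hasDerivAt_fourier_wignerProduct_freq f g x (p / (2 * π * ε))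
  have h : HasDerivAt (fun p => crossWigner ε f g x p)
      (-2 * I / ε * crossWigner ε (positionCLM f - (x : ℂ) • f : 𝓢(ℝ, ℂ)) g x p) p := by
    simp only [crossWigner_eq_fourier]
    refine ((hV.scomp p ((hasDerivAt_id' p).div_const _)).const_mul _).congr_deriv ?_
    have : (ε : ℂ) ≠ 0 := by exact_mod_cast hε
    rw [real_smul]
    push_cast
    field_simp
    ring
  refine h.congr_deriv ?_
  rw [← crossWignerₗ_apply, map_sub, map_smul, crossWignerₗ_apply, crossWignerₗ_apply, smul_eq_mul]

/-- If `ψ` is a Schwartz eigenfunction of the harmonic oscillator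
`−(ε²/2)ψ'' + (x²/2)ψ = λψ` and `φ` is any Schwartz function, then `Ψ = W^ε_φ[ψ]`
satisfies the left Moyal star eigenvalue equation `H ⋆ Ψ = λΨ` for
`H(x,p) = (x²+p²)/2`, written out as an explicit second-order PDE. -/
theorem crossWigner_star_genvalue_left (ε : ℝ) (hε : 0 < ε)
    (ψ φ : SchwartzMap ℝ ℂ) (lam : ℝ)
    (hψ : ∀ x : ℝ, -((ε : ℂ) ^ 2 / 2) * iteratedDeriv 2 (⇑ψ) x
        + ((x : ℂ) ^ 2 / 2) * ψ x = (lam : ℂ) * ψ x) :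
    ∀ x p : ℝ,
      (((x ^ 2 + p ^ 2) / 2 : ℝ) : ℂ) * crossWigner ε (⇑ψ) (⇑φ) x p
        - ((ε : ℂ) ^ 2 / 8) *
            (iteratedDeriv 2 (fun x' : ℝ => crossWigner ε (⇑ψ) (⇑φ) x' p) x
              + iteratedDeriv 2 (fun p' : ℝ => crossWigner ε (⇑ψ) (⇑φ) x p') p)
        + (Complex.I * (ε : ℂ) / 2) *
            ((x : ℂ) * deriv (fun p' : ℝ => crossWigner ε (⇑ψ) (⇑φ) x p') p
              - (p : ℂ) * deriv (fun x' : ℝ => crossWigner ε (⇑ψ) (⇑φ) x' p) x)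
      = (lam : ℂ) * crossWigner ε (⇑ψ) (⇑φ) x p := by
  intro x p
  have hx := hasDerivAt_crossWigner_position hε.ne'
  have hp := hasDerivAt_crossWigner_momentum hε.ne'
  have hxx := iteratedDeriv_two_eq_of_hasDerivAt (fun x' => hx ψ φ x' p)
    (((hx (derivCLM ℝ ℂ ψ) φ x p).const_mul 2).sub ((hx ψ φ x p).const_mul (2 * I * p / ε)))
  have hpp := iteratedDeriv_two_eq_of_hasDerivAt (fun p' => hp ψ φ x p')
    (((hp (positionCLM ψ) φ x p).sub ((hp ψ φ x p).const_mul (x : ℂ))).const_mul (-2 * I / ε))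
  have hψ' : (-((ε : ℂ) ^ 2 / 2)) • derivCLM ℝ ℂ (derivCLM ℝ ℂ ψ)
      + (2⁻¹ : ℂ) • positionCLM (positionCLM ψ) = (lam : ℂ) • ψ := by
    have h2 : ⇑(derivCLM ℝ ℂ (derivCLM ℝ ℂ ψ)) = iteratedDeriv 2 ψ := by
      rw [coe_derivCLM, coe_derivCLM, iteratedDeriv_succ, iteratedDeriv_one]
    ext t
    simp only [add_apply, smul_apply, positionCLM_apply, smul_eq_mul, h2]
    linear_combination hψ t
  have heig := congrArg (crossWignerₗ ε φ x p) hψ'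
  simp only [map_add, map_smul, crossWignerₗ_apply, smul_eq_mul] at heig
  rw [hxx, hpp, (hx ψ φ x p).deriv, (hp ψ φ x p).deriv]
  have : (ε : ℂ) ≠ 0 := by exact_mod_cast hε.ne'
  field_simp
  push_cast
  linear_combination 8 * heig + 4 * (((x : ℂ) ^ 2 + (p : ℂ) ^ 2) * crossWigner ε ψ φ x p
    - crossWigner ε (positionCLM (positionCLM ψ)) φ x p) * I_sq
end

section
/- Let ε > 0, let φ be a Schwartz function on ℝ satisfying −(ε²/2)φ''(x) + (x²/2)φ(x) = μ·φ(x) for all x and some μ ∈ ℝ, and let ψ be any Schwartz function on ℝ. Then Ψ = W^ε_φ[ψ] satisfies the phase-space eigenvalue equation Ψ ⋆ H = μΨ for the harmonic oscillator Hamiltonian H(x,p) = (x² + p²)/2, namely: for all (x,p) ∈ ℝ², ((x² + p²)/2)·Ψ(x,p) − (ε²/8)·(∂²Ψ/∂x² + ∂²Ψ/∂p²)(x,p) − (iε/2)·(x·∂Ψ/∂p − p·∂Ψ/∂x)(x,p) = μ·Ψ(x,p). -/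
/-!
Write `Wₙ[u, v]` for the cross-Wigner transform with the extra weight `yⁿ` in the integrand.
All these integrands are dominated by `C (1 + y²)⁻¹` uniformly in `(x, p)`, so one may
differentiate under the integral sign: `∂ₓ Wₙ[u, v] = Wₙ[u', v] + Wₙ[u, v']` and
`∂ₚ Wₙ = -(i/ε) Wₙ₊₁`. Integrating the `y`-derivative of the integrand over `ℝ` gives
`W₀[u', v] - W₀[u, v'] = (2ip/ε) W₀[u, v]`, and conjugating the eigenvalue equation of `φ`
at `x - y/2` (with `(x - y/2)² = x² - xy + y²/4`) expresses `W₀[ψ, φ'']` through `W₀`, `W₁`, `W₂`.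
The star-eigenvalue equation is a linear combination of these identities.
-/

open MeasureTheory

open Complex ComplexConjugate SchwartzMap

theorem SchwartzMap.exists_one_add_norm_pow_mul_le {E F : Type*} [NormedAddCommGroup E]
    [NormedSpace ℝ E] [NormedAddCommGroup F] [NormedSpace ℝ F] (u : 𝓢(E, F)) (k : ℕ) :
    ∃ C, ∀ z, (1 + ‖z‖) ^ k * ‖u z‖ ≤ C :=
  ⟨_, fun z => by
    simpa using one_add_le_sup_seminorm_apply (𝕜 := ℝ) (m := (k, 0)) le_rfl le_rfl u z⟩

theorem hasDerivAt_integral_of_dominated_of_deriv_le {α E : Type*} [MeasurableSpace α]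
    {μ : Measure α} [NormedAddCommGroup E] [NormedSpace ℝ E] {F F' : ℝ → α → E}
    {bound : α → ℝ} (x₀ : ℝ) (hF_meas : ∀ x, AEStronglyMeasurable (F x) μ)
    (hF_int : Integrable (F x₀) μ) (hF'_meas : AEStronglyMeasurable (F' x₀) μ)
    (h_bound : ∀ x a, ‖F' x a‖ ≤ bound a) (bound_integrable : Integrable bound μ)
    (h_diff : ∀ x a, HasDerivAt (F · a) (F' x a) x) :
    HasDerivAt (fun x => ∫ a, F x a ∂μ) (∫ a, F' x₀ a ∂μ) x₀ :=
  (hasDerivAt_integral_of_dominated_loc_of_deriv_le Filter.univ_mem (.of_forall hF_meas) hF_int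
    hF'_meas (.of_forall fun a x _ => h_bound x a) bound_integrable
    (.of_forall fun a x _ => h_diff x a)).2

noncomputable def crossWignerIntegrand (ε : ℝ) (u v : ℝ → ℂ) (n : ℕ) (x p y : ℝ) : ℂ :=
  (y : ℂ) ^ n * cexp (-I * p * y / ε) * u (x + y / 2) * conj (v (x - y / 2))

noncomputable def crossWignerMoment (ε : ℝ) (u v : ℝ → ℂ) (n : ℕ) (x p : ℝ) : ℂ :=
  ((2 * Real.pi * ε : ℝ) : ℂ)⁻¹ * ∫ y, crossWignerIntegrand ε u v n x p y

theorem crossWignerMoment_zero (ε : ℝ) (u v : ℝ → ℂ) :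
    crossWignerMoment ε u v 0 = crossWigner ε u v := by
  ext x p
  simp [crossWignerMoment, crossWignerIntegrand, crossWigner]

theorem norm_crossWignerIntegrand (ε : ℝ) (u v : ℝ → ℂ) (n : ℕ) (x p y : ℝ) :
    ‖crossWignerIntegrand ε u v n x p y‖ = ‖y‖ ^ n * ‖u (x + y / 2)‖ * ‖v (x - y / 2)‖ := by
  have : -I * p * y / ε = ((-(p * y) / ε : ℝ) : ℂ) * I := by push_cast; ring
  rw [crossWignerIntegrand, this]
  simp only [norm_mul, norm_pow, norm_real, norm_exp_ofReal_mul_I, RCLike.norm_conj, mul_one]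

section Schwartz

variable (ε : ℝ) (u v : 𝓢(ℝ, ℂ)) (n : ℕ) (x p : ℝ)

theorem exists_norm_crossWignerIntegrand_le :
    ∃ C, ∀ ε x p y, ‖crossWignerIntegrand ε u v n x p y‖ ≤ C * (1 + y ^ 2)⁻¹ := by
  obtain ⟨Cu, hu⟩ := u.exists_one_add_norm_pow_mul_le (n + 2)
  obtain ⟨Cv, hv⟩ := v.exists_one_add_norm_pow_mul_le (n + 2)
  refine ⟨Cu * Cv, fun ε x p y => ?_⟩
  set a := x + y / 2
  set b := x - y / 2
  -- `y = a - b`, so the decay of `u` at `a` and of `v` at `b` controls `y`, whatever `x` is.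
  have hy : ‖y‖ ≤ ‖a‖ + ‖b‖ := by
    simpa [a, b, show x + y / 2 - (x - y / 2) = y by ring] using norm_sub_le a b
  have hweight : (1 + y ^ 2) * ‖y‖ ^ n ≤ (1 + ‖a‖) ^ (n + 2) * (1 + ‖b‖) ^ (n + 2) := by
    calc (1 + y ^ 2) * ‖y‖ ^ n ≤ (1 + ‖y‖) ^ (n + 2) := by
          rw [pow_add, mul_comm]
          gcongr
          · linarith [norm_nonneg y]
          · nlinarith [norm_nonneg y, Real.norm_eq_abs y, sq_abs y]
      _ ≤ ((1 + ‖a‖) * (1 + ‖b‖)) ^ (n + 2) := by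
          gcongr
          nlinarith [hy, norm_nonneg a, norm_nonneg b]
      _ = _ := mul_pow _ _ _
  rw [norm_crossWignerIntegrand, ← div_eq_mul_inv, le_div_iff₀ (by positivity)]
  calc ‖y‖ ^ n * ‖u a‖ * ‖v b‖ * (1 + y ^ 2)
      = (1 + y ^ 2) * ‖y‖ ^ n * ‖u a‖ * ‖v b‖ := by ring
    _ ≤ (1 + ‖a‖) ^ (n + 2) * (1 + ‖b‖) ^ (n + 2) * ‖u a‖ * ‖v b‖ := by gcongr
    _ = ((1 + ‖a‖) ^ (n + 2) * ‖u a‖) * ((1 + ‖b‖) ^ (n + 2) * ‖v b‖) := by ring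
    _ ≤ Cu * Cv :=
      mul_le_mul (hu a) (hv b) (by positivity) ((norm_nonneg _).trans (by simpa using hu 0))

theorem continuous_crossWignerIntegrand :
    Continuous (crossWignerIntegrand ε u v n x p) := by
  unfold crossWignerIntegrand
  fun_prop

theorem integrable_crossWignerIntegrand :
    Integrable (crossWignerIntegrand ε u v n x p) := by
  obtain ⟨C, hC⟩ := exists_norm_crossWignerIntegrand_le u v n
  exact (integrable_inv_one_add_sq.const_mul C).mono'
    (continuous_crossWignerIntegrand ε u v n x p).aestronglyMeasurable
    (.of_forall (hC ε x p))

theorem hasDerivAt_crossWignerIntegrand_x (y : ℝ) :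
    HasDerivAt (fun x' => crossWignerIntegrand ε u v n x' p y)
      (crossWignerIntegrand ε (derivCLM ℝ ℂ u) v n x p y
        + crossWignerIntegrand ε u (derivCLM ℝ ℂ v) n x p y) x := by
  have hu := (u.hasDerivAt (x + y / 2)).comp_add_const x (y / 2)
  have hv := ((v.hasDerivAt (x - y / 2)).comp_sub_const x (y / 2)).star
  refine ((hu.const_mul ((y : ℂ) ^ n * cexp (-I * p * y / ε))).mul hv).congr_deriv ?_
  simp only [crossWignerIntegrand, derivCLM_apply, Complex.star_def]

theorem hasDerivAt_crossWignerIntegrand_p (y : ℝ) :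
    HasDerivAt (fun p' => crossWignerIntegrand ε u v n x p' y)
      (-I / ε * crossWignerIntegrand ε u v (n + 1) x p y) p := by
  have hphase : HasDerivAt (fun p' : ℝ => -I * p' * y / ε) (-I * y / ε) p := by
    simpa using (((hasDerivAt_id p).ofReal_comp.const_mul (-I)).mul_const (y : ℂ)).div_const ε
  refine (((hphase.cexp.const_mul ((y : ℂ) ^ n)).mul_const (u (x + y / 2))).mul_const
    (conj (v (x - y / 2)))).congr_deriv ?_
  simp only [crossWignerIntegrand, pow_succ]
  ring

theorem hasDerivAt_crossWignerIntegrand_y (y : ℝ) :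
    HasDerivAt (crossWignerIntegrand ε u v 0 x p)
      (-I * p / ε * crossWignerIntegrand ε u v 0 x p y
        + (crossWignerIntegrand ε (derivCLM ℝ ℂ u) v 0 x p y
          - crossWignerIntegrand ε u (derivCLM ℝ ℂ v) 0 x p y) / 2) y := by
  have hphase : HasDerivAt (fun y' : ℝ => -I * p * y' / ε) (-I * p / ε) y := by
    simpa using ((hasDerivAt_id y).ofReal_comp.const_mul (-I * p)).div_const ε
  have hu : HasDerivAt (fun y' => u (x + y' / 2)) ((1 / 2 : ℝ) • deriv u (x + y / 2)) y :=
    (u.hasDerivAt _).scomp y (((hasDerivAt_id y).div_const 2).const_add x)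
  have hv : HasDerivAt (fun y' => v (x - y' / 2)) ((-(1 / 2) : ℝ) • deriv v (x - y / 2)) y :=
    (v.hasDerivAt _).scomp y (((hasDerivAt_id y).div_const 2).const_sub x)
  have hfun : crossWignerIntegrand ε u v 0 x p =
      fun y' : ℝ => cexp (-I * p * y' / ε) * u (x + y' / 2) * conj (v (x - y' / 2)) := by
    ext y'
    simp [crossWignerIntegrand]
  rw [hfun]
  refine ((hphase.cexp.mul hu).mul hv.star).congr_deriv ?_
  simp only [crossWignerIntegrand, derivCLM_apply, pow_zero, one_mul, real_smul, Complex.star_def,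
    map_mul, conj_ofReal, Pi.mul_apply]
  push_cast
  ring

theorem hasDerivAt_crossWignerMoment_x :
    HasDerivAt (fun x' => crossWignerMoment ε u v n x' p)
      (crossWignerMoment ε (derivCLM ℝ ℂ u) v n x p
        + crossWignerMoment ε u (derivCLM ℝ ℂ v) n x p) x := by
  obtain ⟨C₁, hC₁⟩ := exists_norm_crossWignerIntegrand_le (derivCLM ℝ ℂ u) v n
  obtain ⟨C₂, hC₂⟩ := exists_norm_crossWignerIntegrand_le u (derivCLM ℝ ℂ v) n
  have h := hasDerivAt_integral_of_dominated_of_deriv_le x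
    (fun x' => (continuous_crossWignerIntegrand ε u v n x' p).aestronglyMeasurable)
    (integrable_crossWignerIntegrand ε u v n x p)
    ((continuous_crossWignerIntegrand ε _ v n x p).add
      (continuous_crossWignerIntegrand ε u _ n x p)).aestronglyMeasurable
    (fun x' y => (norm_add_le _ _).trans (add_le_add (hC₁ ε x' p y) (hC₂ ε x' p y)))
    ((integrable_inv_one_add_sq.const_mul C₁).add (integrable_inv_one_add_sq.const_mul C₂))
    (fun x' y => hasDerivAt_crossWignerIntegrand_x ε u v n x' p y)
  rw [integral_add (integrable_crossWignerIntegrand ε _ v n x p)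
    (integrable_crossWignerIntegrand ε u _ n x p)] at h
  simpa only [crossWignerMoment, mul_add] using h.const_mul ((2 * Real.pi * ε : ℝ) : ℂ)⁻¹

theorem hasDerivAt_crossWignerMoment_p :
    HasDerivAt (fun p' => crossWignerMoment ε u v n x p')
      (-I / ε * crossWignerMoment ε u v (n + 1) x p) p := by
  obtain ⟨C, hC⟩ := exists_norm_crossWignerIntegrand_le u v (n + 1)
  have h := hasDerivAt_integral_of_dominated_of_deriv_le p
    (fun p' => (continuous_crossWignerIntegrand ε u v n x p').aestronglyMeasurable)
    (integrable_crossWignerIntegrand ε u v n x p)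
    ((continuous_crossWignerIntegrand ε u v (n + 1) x p).const_mul _).aestronglyMeasurable
    (fun p' y => (norm_mul_le _ _).trans (mul_le_mul_of_nonneg_left (hC ε x p' y) (norm_nonneg _)))
    ((integrable_inv_one_add_sq.const_mul C).const_mul ‖-I / ε‖)
    (fun p' y => hasDerivAt_crossWignerIntegrand_p ε u v n x p' y)
  rw [integral_const_mul] at h
  simpa only [crossWignerMoment, mul_left_comm] using h.const_mul ((2 * Real.pi * ε : ℝ) : ℂ)⁻¹

theorem iteratedDeriv_two_crossWignerMoment_x :
    iteratedDeriv 2 (fun x' => crossWignerMoment ε u v n x' p) x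
      = crossWignerMoment ε (derivCLM ℝ ℂ (derivCLM ℝ ℂ u)) v n x p
        + 2 * crossWignerMoment ε (derivCLM ℝ ℂ u) (derivCLM ℝ ℂ v) n x p
        + crossWignerMoment ε u (derivCLM ℝ ℂ (derivCLM ℝ ℂ v)) n x p := by
  have hderiv : deriv (fun x' => crossWignerMoment ε u v n x' p) = fun x' =>
      crossWignerMoment ε (derivCLM ℝ ℂ u) v n x' p
        + crossWignerMoment ε u (derivCLM ℝ ℂ v) n x' p :=
    funext fun x' => (hasDerivAt_crossWignerMoment_x ε u v n x' p).deriv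
  rw [iteratedDeriv_succ, iteratedDeriv_one, hderiv]
  exact ((hasDerivAt_crossWignerMoment_x ε _ v n x p).add
    (hasDerivAt_crossWignerMoment_x ε u _ n x p)).deriv.trans (by ring)

theorem iteratedDeriv_two_crossWignerMoment_p :
    iteratedDeriv 2 (fun p' => crossWignerMoment ε u v n x p') p
      = -((ε : ℂ) ^ 2)⁻¹ * crossWignerMoment ε u v (n + 2) x p := by
  have hderiv : deriv (fun p' => crossWignerMoment ε u v n x p') = fun p' =>
      -I / ε * crossWignerMoment ε u v (n + 1) x p' :=
    funext fun p' => (hasDerivAt_crossWignerMoment_p ε u v n x p').deriv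
  rw [iteratedDeriv_succ, iteratedDeriv_one, hderiv,
    ((hasDerivAt_crossWignerMoment_p ε u v (n + 1) x p).const_mul _).deriv,
    show n + 1 + 1 = n + 2 from rfl]
  linear_combination (crossWignerMoment ε u v (n + 2) x p / ε ^ 2) * I_sq

theorem crossWignerMoment_derivCLM_sub_derivCLM :
    crossWignerMoment ε (derivCLM ℝ ℂ u) v 0 x p - crossWignerMoment ε u (derivCLM ℝ ℂ v) 0 x p
      = 2 * I * p / ε * crossWignerMoment ε u v 0 x p := by
  have hint := integrable_crossWignerIntegrand ε
  have h := integral_eq_zero_of_hasDerivAt_of_integrable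
    (hasDerivAt_crossWignerIntegrand_y ε u v x p)
    (((hint u v 0 x p).const_mul _).add (((hint _ v 0 x p).sub (hint u _ 0 x p)).div_const 2))
    (hint u v 0 x p)
  rw [integral_add (by fun_prop) (by fun_prop), integral_const_mul, integral_div,
    integral_sub (hint _ v 0 x p) (hint u _ 0 x p)] at h
  simp only [crossWignerMoment]
  linear_combination 2 * ((2 * Real.pi * ε : ℝ) : ℂ)⁻¹ * h

theorem crossWignerMoment_of_oscillator_eigen (mu : ℝ)
    (hv : ∀ z : ℝ, -((ε : ℂ) ^ 2 / 2) * iteratedDeriv 2 v z + ((z : ℂ) ^ 2 / 2) * v z = mu * v z) :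
    -((ε : ℂ) ^ 2 / 2) * crossWignerMoment ε u (derivCLM ℝ ℂ (derivCLM ℝ ℂ v)) 0 x p
      + ((x : ℂ) ^ 2 / 2) * crossWignerMoment ε u v 0 x p
      - ((x : ℂ) / 2) * crossWignerMoment ε u v 1 x p
      + (1 / 8 : ℂ) * crossWignerMoment ε u v 2 x p
      = mu * crossWignerMoment ε u v 0 x p := by
  have hint := integrable_crossWignerIntegrand ε u
  have hv'' (z : ℝ) : derivCLM ℝ ℂ (derivCLM ℝ ℂ v) z = iteratedDeriv 2 v z := by
    rw [iteratedDeriv_succ, iteratedDeriv_one]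
    rfl
  have hpointwise : ∀ y : ℝ,
      -((ε : ℂ) ^ 2 / 2) * crossWignerIntegrand ε u (derivCLM ℝ ℂ (derivCLM ℝ ℂ v)) 0 x p y
        + ((x : ℂ) ^ 2 / 2) * crossWignerIntegrand ε u v 0 x p y
        - ((x : ℂ) / 2) * crossWignerIntegrand ε u v 1 x p y
        + (1 / 8 : ℂ) * crossWignerIntegrand ε u v 2 x p y
        = mu * crossWignerIntegrand ε u v 0 x p y := by
    intro y
    have hy := congrArg conj (hv (x - y / 2))
    simp only [map_add, map_mul, map_neg, map_div₀, map_pow, map_ofNat, conj_ofReal] at hy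
    simp only [crossWignerIntegrand, hv'']
    push_cast at hy ⊢
    linear_combination cexp (-I * p * y / ε) * u (x + y / 2) * hy
  have hsum := integral_congr_ae (μ := volume) (.of_forall hpointwise)
  rw [integral_add (by fun_prop) (by fun_prop), integral_sub (by fun_prop) (by fun_prop),
    integral_add (by fun_prop) (by fun_prop)] at hsum
  simp only [integral_const_mul] at hsum
  simp only [crossWignerMoment]
  linear_combination ((2 * Real.pi * ε : ℝ) : ℂ)⁻¹ * hsum

end Schwartz

/-- If `φ` is a Schwartz eigenfunction of the harmonic oscillator
`−(ε²/2)φ'' + (x²/2)φ = μφ` and `ψ` is any Schwartz function, then `Ψ = W^ε_φ[ψ]`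
satisfies the right Moyal star eigenvalue equation `Ψ ⋆ H = μΨ` for
`H(x,p) = (x²+p²)/2`, written out as an explicit second-order PDE. -/
theorem crossWigner_star_genvalue_right (ε : ℝ) (hε : 0 < ε)
    (ψ φ : SchwartzMap ℝ ℂ) (mu : ℝ)
    (hφ : ∀ x : ℝ, -((ε : ℂ) ^ 2 / 2) * iteratedDeriv 2 (⇑φ) x
        + ((x : ℂ) ^ 2 / 2) * φ x = (mu : ℂ) * φ x) :
    ∀ x p : ℝ,
      (((x ^ 2 + p ^ 2) / 2 : ℝ) : ℂ) * crossWigner ε (⇑ψ) (⇑φ) x p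
        - ((ε : ℂ) ^ 2 / 8) *
            (iteratedDeriv 2 (fun x' : ℝ => crossWigner ε (⇑ψ) (⇑φ) x' p) x
              + iteratedDeriv 2 (fun p' : ℝ => crossWigner ε (⇑ψ) (⇑φ) x p') p)
        - (Complex.I * (ε : ℂ) / 2) *
            ((x : ℂ) * deriv (fun p' : ℝ => crossWigner ε (⇑ψ) (⇑φ) x p') p
              - (p : ℂ) * deriv (fun x' : ℝ => crossWigner ε (⇑ψ) (⇑φ) x' p) x)
      = (mu : ℂ) * crossWigner ε (⇑ψ) (⇑φ) x p := by
  intro x p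
  simp only [← crossWignerMoment_zero]
  rw [iteratedDeriv_two_crossWignerMoment_x, iteratedDeriv_two_crossWignerMoment_p,
    (hasDerivAt_crossWignerMoment_x ε ψ φ 0 x p).deriv,
    (hasDerivAt_crossWignerMoment_p ε ψ φ 0 x p).deriv]
  have rel₀ := crossWignerMoment_derivCLM_sub_derivCLM ε ψ φ x p
  have rel₁ := crossWignerMoment_derivCLM_sub_derivCLM ε (derivCLM ℝ ℂ ψ) φ x p
  have rel₂ := crossWignerMoment_derivCLM_sub_derivCLM ε ψ (derivCLM ℝ ℂ φ) x p
  have heig := crossWignerMoment_of_oscillator_eigen ε ψ φ x p mu hφ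
  have hε' : (ε : ℂ) ≠ 0 := by exact_mod_cast hε.ne'
  field_simp at rel₀ rel₁ rel₂ ⊢
  push_cast
  -- `rel₁` and `rel₂` trade the second `x`-derivatives for first ones, which `rel₀` then
  -- turns into the `p²` term.
  linear_combination 16 * heig - 2 * ε * rel₁ - 6 * ε * rel₂ + 4 * I * p * rel₀
    + 8 * (p ^ 2 * crossWignerMoment ε ψ φ 0 x p + x * crossWignerMoment ε ψ φ 1 x p) * I_sq
end

section
/- Let ε > 0 and n, m ∈ ℕ, and let W_{nm} = W^ε_{v_mᵋ}[v_nᵋ] be the cross-Wigner transform of the Hermite functions v_nᵋ and v_mᵋ. Then W_{nm} satisfies the Moyal (sine) bracket eigenvalue equation of the quantum Liouville operator of the harmonic oscillator: for all (x,p) ∈ ℝ², p·(∂W_{nm}/∂x)(x,p) − x·(∂W_{nm}/∂p)(x,p) = (i/ε)·(E_nᵋ − E_mᵋ)·W_{nm}(x,p), where E_kᵋ = (k + 1/2)ε; equivalently, the eigenvalue is i(n − m). -/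
open MeasureTheory

/-- The nth physicists' Hermite polynomial (as a function). -/
noncomputable def hermitePoly (n : ℕ) (x : ℝ) : ℝ :=
  (-1 : ℝ) ^ n * Real.exp (x ^ 2) * iteratedDeriv n (fun t : ℝ => Real.exp (-t ^ 2)) x

/-- The semiclassical Hermite function `v_nᵋ`. -/
noncomputable def hermiteFun (ε : ℝ) (n : ℕ) (x : ℝ) : ℝ :=
  (Real.pi * ε) ^ (-(1 / 4 : ℝ)) * ((2 : ℝ) ^ n * (n.factorial : ℝ)) ^ (-(1 / 2 : ℝ)) *
    Real.exp (-x ^ 2 / (2 * ε)) * hermitePoly n (x / Real.sqrt ε)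

/-!
Write the cross-Wigner transform as `(2πε)⁻¹ ∫ e^{-ipy/ε} u(x + y/2) w(x - y/2) dy` with
`u = f`, `w = conj g`. Differentiating under the integral sign, `∂ₓ` produces `u'w + uw'` and `∂ₚ`
the first moment `-(i/ε) ∫ y (…)`. An integration by parts in `y` turns `p (u'w + uw')` into
`(ε / 2i) (u''w - uw'')`, and the eigen-equations `ε² u'' = (t² - 2E) u` rewrite `u''w - uw''` as
`ε⁻² ((a² - b²) - 2(E₁ - E₂)) uw` with `a² - b² = 2xy` for `a = x + y/2`, `b = x - y/2`. The
`2xy` part cancels `x ∂ₚ`, leaving `(i/ε)(E₁ - E₂)` times the transform. Hermite functions are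
polynomials times `e^{-t²/2ε}`, a class closed under differentiation whose members all decay like a
Gaussian, which justifies every exchange of limits.
-/

open Complex Filter Topology Polynomial

def HasGaussianDecay (u : ℝ → ℂ) : Prop :=
  ∃ C c : ℝ, 0 < c ∧ ∀ t, ‖u t‖ ≤ C * Real.exp (-c * t ^ 2)

theorem HasGaussianDecay.conj {u : ℝ → ℂ} (hu : HasGaussianDecay u) :
    HasGaussianDecay fun t => starRingEnd ℂ (u t) := by
  simpa only [HasGaussianDecay, RCLike.norm_conj] using hu

theorem HasGaussianDecay.exists_bound_mul_comp {u w : ℝ → ℂ} (hu : HasGaussianDecay u)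
    (hw : HasGaussianDecay w) :
    ∃ C c : ℝ, 0 < c ∧ ∀ x y, ‖u (x + y / 2) * w (x - y / 2)‖ ≤ C * Real.exp (-c * y ^ 2) := by
  obtain ⟨C₁, c₁, hc₁, hu⟩ := hu
  obtain ⟨C₂, c₂, hc₂, hw⟩ := hw
  have hC₁ : 0 ≤ C₁ := nonneg_of_mul_nonneg_left ((norm_nonneg _).trans (hu 0)) (Real.exp_pos _)
  have hC₂ : 0 ≤ C₂ := nonneg_of_mul_nonneg_left ((norm_nonneg _).trans (hw 0)) (Real.exp_pos _)
  refine ⟨C₁ * C₂, min c₁ c₂ / 2, by positivity, fun x y => ?_⟩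
  -- `c₁ a² + c₂ b² ≥ min c₁ c₂ (a² + b²) ≥ min c₁ c₂ (a - b)² / 2`, and `a - b = y`
  have hexp : c₁ * (x + y / 2) ^ 2 + c₂ * (x - y / 2) ^ 2 ≥ min c₁ c₂ / 2 * y ^ 2 := by
    have := min_le_left c₁ c₂
    have := min_le_right c₁ c₂
    nlinarith [sq_nonneg (x + y / 2), sq_nonneg (x - y / 2), sq_nonneg x, lt_min hc₁ hc₂]
  calc ‖u (x + y / 2) * w (x - y / 2)‖
      ≤ C₁ * Real.exp (-c₁ * (x + y / 2) ^ 2) * (C₂ * Real.exp (-c₂ * (x - y / 2) ^ 2)) := by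
        rw [norm_mul]
        exact mul_le_mul (hu _) (hw _) (norm_nonneg _) (by positivity)
    _ = C₁ * C₂ * Real.exp (-(c₁ * (x + y / 2) ^ 2 + c₂ * (x - y / 2) ^ 2)) := by
        rw [neg_add, Real.exp_add, neg_mul, neg_mul]; ring
    _ ≤ C₁ * C₂ * Real.exp (-(min c₁ c₂ / 2) * y ^ 2) := by
        gcongr
        linarith

theorem integrable_of_le_gaussian {f : ℝ → ℂ} {C c : ℝ} (hc : 0 < c) (hf : Continuous f)
    (h : ∀ y, ‖f y‖ ≤ C * Real.exp (-c * y ^ 2)) : Integrable f :=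
  ((integrable_exp_neg_mul_sq hc).const_mul C).mono' hf.aestronglyMeasurable (ae_of_all _ h)

theorem Polynomial.tendsto_eval_mul_exp_neg_mul_sq_cocompact (Q : ℝ[X]) {c : ℝ} (hc : 0 < c) :
    Tendsto (fun t => Q.eval t * Real.exp (-c * t ^ 2)) (cocompact ℝ) (𝓝 0) := by
  induction Q using Polynomial.induction_on' with
  | add Q R hQ hR => simpa [add_mul] using hQ.add hR
  | monomial n a =>
    have h := (tendsto_rpow_abs_mul_exp_neg_mul_sq_cocompact hc n).const_mul |a|
    rw [mul_zero] at h
    refine squeeze_zero_norm (fun t => le_of_eq ?_) h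
    rw [eval_monomial, Real.norm_eq_abs, abs_mul, abs_mul, abs_pow, Real.rpow_natCast,
      Real.abs_exp, mul_assoc]

theorem Polynomial.exists_abs_eval_mul_exp_neg_mul_sq_le (Q : ℝ[X]) {c : ℝ} (hc : 0 < c) :
    ∃ C, ∀ t, |Q.eval t| * Real.exp (-c * t ^ 2) ≤ C := by
  let F : ZeroAtInftyContinuousMap ℝ ℝ := ⟨⟨fun t => Q.eval t * Real.exp (-c * t ^ 2), by fun_prop⟩,
    Q.tendsto_eval_mul_exp_neg_mul_sq_cocompact hc⟩
  refine ⟨‖F.toBCF‖, fun t => ?_⟩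
  have h : |Q.eval t * Real.exp (-c * t ^ 2)| ≤ ‖F.toBCF‖ := F.toBCF.norm_coe_le_norm t
  rwa [abs_mul, Real.abs_exp] at h

noncomputable def wignerIntegrand (ε : ℝ) (u w : ℝ → ℂ) (x p y : ℝ) : ℂ :=
  cexp (-I * p * y / ε) * u (x + y / 2) * w (x - y / 2)

noncomputable def wignerIntegral (ε : ℝ) (u w : ℝ → ℂ) (x p : ℝ) : ℂ :=
  ∫ y, wignerIntegrand ε u w x p y

theorem crossWigner_eq_wignerIntegral (ε : ℝ) (f g : ℝ → ℂ) (x p : ℝ) :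
    crossWigner ε f g x p =
      ((2 * Real.pi * ε : ℝ) : ℂ)⁻¹ * wignerIntegral ε f (fun t => starRingEnd ℂ (g t)) x p :=
  rfl

section WignerIntegral

variable {ε : ℝ} {u u' w w' : ℝ → ℂ}

theorem norm_wignerIntegrand (u w : ℝ → ℂ) (x p y : ℝ) :
    ‖wignerIntegrand ε u w x p y‖ = ‖u (x + y / 2) * w (x - y / 2)‖ := by
  have : (-I * p * y / ε).re = 0 := by simp
  rw [wignerIntegrand, mul_assoc, norm_mul, norm_exp, this, Real.exp_zero, one_mul]

theorem continuous_wignerIntegrand (hu : Continuous u) (hw : Continuous w) (x p : ℝ) :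
    Continuous (wignerIntegrand ε u w x p) := by
  unfold wignerIntegrand
  fun_prop

theorem HasGaussianDecay.exists_bound_wignerIntegrand (hu : HasGaussianDecay u)
    (hw : HasGaussianDecay w) :
    ∃ C c : ℝ, 0 < c ∧ ∀ x p y, ‖wignerIntegrand ε u w x p y‖ ≤ C * Real.exp (-c * y ^ 2) := by
  obtain ⟨C, c, hc, h⟩ := hu.exists_bound_mul_comp hw
  exact ⟨C, c, hc, fun x p y => (norm_wignerIntegrand u w x p y).trans_le (h x y)⟩

theorem integrable_wignerIntegrand (hu : Continuous u) (hw : Continuous w)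
    (du : HasGaussianDecay u) (dw : HasGaussianDecay w) (x p : ℝ) :
    Integrable (wignerIntegrand ε u w x p) := by
  obtain ⟨C, c, hc, h⟩ := du.exists_bound_wignerIntegrand (ε := ε) dw
  exact integrable_of_le_gaussian hc (continuous_wignerIntegrand hu hw x p) (h x p)

theorem integrable_mul_wignerIntegrand (hu : Continuous u) (hw : Continuous w)
    (du : HasGaussianDecay u) (dw : HasGaussianDecay w) (x p : ℝ) :
    Integrable fun y : ℝ => (y : ℂ) * wignerIntegrand ε u w x p y := by
  obtain ⟨C, c, hc, h⟩ := du.exists_bound_wignerIntegrand (ε := ε) dw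
  refine ((integrable_mul_exp_neg_mul_sq hc).norm.const_mul C).mono'
    (continuous_ofReal.mul (continuous_wignerIntegrand hu hw x p)).aestronglyMeasurable
    (ae_of_all _ fun y => ?_)
  rw [norm_mul, norm_real, norm_mul, Real.norm_of_nonneg (Real.exp_pos _).le, mul_left_comm]
  exact mul_le_mul_of_nonneg_left (h x p y) (norm_nonneg _)

theorem hasDerivAt_wignerIntegrand_x (hu : ∀ t, HasDerivAt u (u' t) t)
    (hw : ∀ t, HasDerivAt w (w' t) t) (x p y : ℝ) :
    HasDerivAt (fun x => wignerIntegrand ε u w x p y)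
      (wignerIntegrand ε u' w x p y + wignerIntegrand ε u w' x p y) x := by
  have hu' := ((hu (x + y / 2)).comp_add_const x (y / 2)).const_mul (cexp (-I * p * y / ε))
  have hw' := (hw (x - y / 2)).comp_sub_const x (y / 2)
  exact (hu'.mul hw').congr_deriv (by unfold wignerIntegrand; ring)

theorem hasDerivAt_wignerIntegrand_p (u w : ℝ → ℂ) (x p y : ℝ) :
    HasDerivAt (fun p => wignerIntegrand ε u w x p y)
      (-I * y / ε * wignerIntegrand ε u w x p y) p := by
  have hK : HasDerivAt (fun p : ℝ => cexp (-I * p * y / ε))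
      (cexp (-I * p * y / ε) * (-I * (1 : ℝ) * y / ε)) p :=
    ((((hasDerivAt_id p).ofReal_comp).const_mul (-I)).mul_const (y : ℂ)).div_const (ε : ℂ) |>.cexp
  exact ((hK.mul_const _).mul_const _).congr_deriv (by unfold wignerIntegrand; push_cast; ring)

theorem hasDerivAt_wignerIntegrand_y (hu : ∀ t, HasDerivAt u (u' t) t)
    (hw : ∀ t, HasDerivAt w (w' t) t) (x p y : ℝ) :
    HasDerivAt (fun y => wignerIntegrand ε u w x p y)
      (-I * p / ε * wignerIntegrand ε u w x p y
        + (wignerIntegrand ε u' w x p y - wignerIntegrand ε u w' x p y) / 2) y := by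
  have hK : HasDerivAt (fun y : ℝ => cexp (-I * p * y / ε))
      (cexp (-I * p * y / ε) * (-I * p * (1 : ℝ) / ε)) y :=
    (((hasDerivAt_id y).ofReal_comp.const_mul (-I * p)).div_const (ε : ℂ)).cexp
  have hu' : HasDerivAt (fun y : ℝ => u (x + y / 2)) ((1 / 2 : ℝ) • u' (x + y / 2)) y :=
    (hu _).scomp y (((hasDerivAt_id y).div_const 2).const_add x)
  have hw' : HasDerivAt (fun y : ℝ => w (x - y / 2)) (-(1 / 2 : ℝ) • w' (x - y / 2)) y :=
    (hw _).scomp y (((hasDerivAt_id y).div_const 2).const_sub x)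
  refine ((hK.fun_mul hu').fun_mul hw').congr_deriv ?_
  simp only [wignerIntegrand, real_smul]
  push_cast
  ring

theorem hasDerivAt_wignerIntegral_x (hu : ∀ t, HasDerivAt u (u' t) t)
    (hw : ∀ t, HasDerivAt w (w' t) t) (hu' : Continuous u') (hw' : Continuous w')
    (du : HasGaussianDecay u) (dw : HasGaussianDecay w) (du' : HasGaussianDecay u')
    (dw' : HasGaussianDecay w') (x p : ℝ) :
    HasDerivAt (fun x => wignerIntegral ε u w x p)
      (wignerIntegral ε u' w x p + wignerIntegral ε u w' x p) x := by
  have hu₀ : Continuous u := continuous_iff_continuousAt.2 fun t => (hu t).continuousAt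
  have hw₀ : Continuous w := continuous_iff_continuousAt.2 fun t => (hw t).continuousAt
  obtain ⟨C₁, c₁, hc₁, h₁⟩ := du'.exists_bound_wignerIntegrand (ε := ε) dw
  obtain ⟨C₂, c₂, hc₂, h₂⟩ := du.exists_bound_wignerIntegrand (ε := ε) dw'
  have i₁ := integrable_wignerIntegrand (ε := ε) hu' hw₀ du' dw x p
  have i₂ := integrable_wignerIntegrand (ε := ε) hu₀ hw' du dw' x p
  have key := hasDerivAt_integral_of_dominated_loc_of_deriv_le
    (F' := fun x (y : ℝ) => wignerIntegrand ε u' w x p y + wignerIntegrand ε u w' x p y)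
    (bound := fun y => C₁ * Real.exp (-c₁ * y ^ 2) + C₂ * Real.exp (-c₂ * y ^ 2)) univ_mem
    (Eventually.of_forall fun x => (continuous_wignerIntegrand hu₀ hw₀ x p).aestronglyMeasurable)
    (integrable_wignerIntegrand hu₀ hw₀ du dw x p) (i₁.add i₂).aestronglyMeasurable
    (ae_of_all _ fun y x _ => (norm_add_le _ _).trans (add_le_add (h₁ x p y) (h₂ x p y)))
    (((integrable_exp_neg_mul_sq hc₁).const_mul C₁).add
      ((integrable_exp_neg_mul_sq hc₂).const_mul C₂))
    (ae_of_all _ fun y x _ => hasDerivAt_wignerIntegrand_x hu hw x p y)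
  rw [integral_add i₁ i₂] at key
  exact key.2

theorem hasDerivAt_wignerIntegral_p (hu : Continuous u) (hw : Continuous w)
    (du : HasGaussianDecay u) (dw : HasGaussianDecay w) (x p : ℝ) :
    HasDerivAt (fun p => wignerIntegral ε u w x p)
      (-I / ε * ∫ y : ℝ, (y : ℂ) * wignerIntegrand ε u w x p y) p := by
  obtain ⟨C, c, hc, h⟩ := du.exists_bound_wignerIntegrand (ε := ε) dw
  have key := hasDerivAt_integral_of_dominated_loc_of_deriv_le
    (F' := fun p (y : ℝ) => -I / ε * ((y : ℂ) * wignerIntegrand ε u w x p y))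
    (bound := fun y => ‖(ε : ℂ)‖⁻¹ * C * ‖y * Real.exp (-c * y ^ 2)‖) univ_mem
    (Eventually.of_forall fun p => (continuous_wignerIntegrand hu hw x p).aestronglyMeasurable)
    (integrable_wignerIntegrand hu hw du dw x p)
    ((integrable_mul_wignerIntegrand hu hw du dw x p).const_mul _).aestronglyMeasurable
    (ae_of_all _ fun y p _ => ?_)
    ((integrable_mul_exp_neg_mul_sq hc).norm.const_mul _)
    (ae_of_all _ fun y p _ => (hasDerivAt_wignerIntegrand_p u w x p y).congr_deriv (by ring))
  · rw [integral_const_mul] at key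
    exact key.2
  · rw [norm_mul, norm_div, norm_neg, norm_I, one_div, norm_mul, norm_mul, norm_real, norm_real,
      Real.norm_of_nonneg (Real.exp_pos _).le, mul_assoc, mul_left_comm C]
    gcongr
    exact h x p y

end WignerIntegral

structure HasGaussianDecayTwoDerivs (u u' u'' : ℝ → ℂ) : Prop where
  hasDerivAt : ∀ t, HasDerivAt u (u' t) t
  hasDerivAt_deriv : ∀ t, HasDerivAt u' (u'' t) t
  continuous_deriv_deriv : Continuous u''
  decay : HasGaussianDecay u
  decay_deriv : HasGaussianDecay u'
  decay_deriv_deriv : HasGaussianDecay u''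

namespace HasGaussianDecayTwoDerivs

variable {u u' u'' : ℝ → ℂ}

theorem continuous (hu : HasGaussianDecayTwoDerivs u u' u'') : Continuous u :=
  continuous_iff_continuousAt.2 fun t => (hu.hasDerivAt t).continuousAt

theorem continuous_deriv (hu : HasGaussianDecayTwoDerivs u u' u'') : Continuous u' :=
  continuous_iff_continuousAt.2 fun t => (hu.hasDerivAt_deriv t).continuousAt

theorem conj (hu : HasGaussianDecayTwoDerivs u u' u'') :
    HasGaussianDecayTwoDerivs (fun t => starRingEnd ℂ (u t)) (fun t => starRingEnd ℂ (u' t))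
      (fun t => starRingEnd ℂ (u'' t)) where
  hasDerivAt t := (hu.hasDerivAt t).star
  hasDerivAt_deriv t := (hu.hasDerivAt_deriv t).star
  continuous_deriv_deriv := continuous_conj.comp hu.continuous_deriv_deriv
  decay := hu.decay.conj
  decay_deriv := hu.decay_deriv.conj
  decay_deriv_deriv := hu.decay_deriv_deriv.conj

end HasGaussianDecayTwoDerivs

section Moyal

variable {ε : ℝ} {u u' u'' w w' w'' : ℝ → ℂ}

theorem wignerIntegral_integration_by_parts (hu : HasGaussianDecayTwoDerivs u u' u'')
    (hw : HasGaussianDecayTwoDerivs w w' w'') (x p : ℝ) :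
    I * p / ε * (wignerIntegral ε u' w x p + wignerIntegral ε u w' x p)
      = (wignerIntegral ε u'' w x p - wignerIntegral ε u w'' x p) / 2 := by
  have i₁ := integrable_wignerIntegrand (ε := ε) hu.continuous_deriv hw.continuous hu.decay_deriv
    hw.decay x p
  have i₂ := integrable_wignerIntegrand (ε := ε) hu.continuous hw.continuous_deriv hu.decay
    hw.decay_deriv x p
  have i₃ := integrable_wignerIntegrand (ε := ε) hu.continuous_deriv_deriv hw.continuous
    hu.decay_deriv_deriv hw.decay x p
  have i₄ := integrable_wignerIntegrand (ε := ε) hu.continuous hw.continuous_deriv_deriv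
    hu.decay hw.decay_deriv_deriv x p
  -- the mixed terms `u' w'` produced by the two summands cancel
  have hderiv : ∀ y, HasDerivAt
      (fun y => wignerIntegrand ε u' w x p y + wignerIntegrand ε u w' x p y)
      (-I * p / ε * (wignerIntegrand ε u' w x p y + wignerIntegrand ε u w' x p y)
        + (wignerIntegrand ε u'' w x p y - wignerIntegrand ε u w'' x p y) / 2) y := fun y =>
    ((hasDerivAt_wignerIntegrand_y hu.hasDerivAt_deriv hw.hasDerivAt x p y).add
      (hasDerivAt_wignerIntegrand_y hu.hasDerivAt hw.hasDerivAt_deriv x p y)).congr_deriv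
      (by ring)
  have i₁₂ : Integrable fun y => wignerIntegrand ε u' w x p y + wignerIntegrand ε u w' x p y :=
    i₁.add i₂
  have i₃₄ : Integrable fun y => wignerIntegrand ε u'' w x p y - wignerIntegrand ε u w'' x p y :=
    i₃.sub i₄
  have h := integral_eq_zero_of_hasDerivAt_of_integrable hderiv
    ((i₁₂.const_mul _).add (i₃₄.div_const _)) i₁₂
  rw [integral_add (i₁₂.const_mul _) (i₃₄.div_const _), integral_const_mul, integral_div,
    integral_add i₁ i₂, integral_sub i₃ i₄] at h
  unfold wignerIntegral
  linear_combination -h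

theorem sq_mul_wignerIntegrand_sub_of_eigen {E₁ E₂ : ℝ}
    (hu : ∀ t, -(ε ^ 2 / 2) * u'' t + t ^ 2 / 2 * u t = E₁ * u t)
    (hw : ∀ t, -(ε ^ 2 / 2) * w'' t + t ^ 2 / 2 * w t = E₂ * w t) (x p y : ℝ) :
    ε ^ 2 * (wignerIntegrand ε u'' w x p y - wignerIntegrand ε u w'' x p y)
      = 2 * x * (y * wignerIntegrand ε u w x p y)
        - 2 * (E₁ - E₂) * wignerIntegrand ε u w x p y := by
  have ha := hu (x + y / 2)
  have hb := hw (x - y / 2)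
  unfold wignerIntegrand
  push_cast at ha hb ⊢
  linear_combination (-2 * cexp (-I * p * y / ε) * w (x - y / 2)) * ha
    + (2 * cexp (-I * p * y / ε) * u (x + y / 2)) * hb

theorem wignerIntegral_moyal {E₁ E₂ : ℝ} (hε : ε ≠ 0) (hu : HasGaussianDecayTwoDerivs u u' u'')
    (hw : HasGaussianDecayTwoDerivs w w' w'')
    (huE : ∀ t, -(ε ^ 2 / 2) * u'' t + t ^ 2 / 2 * u t = E₁ * u t)
    (hwE : ∀ t, -(ε ^ 2 / 2) * w'' t + t ^ 2 / 2 * w t = E₂ * w t) (x p : ℝ) :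
    p * deriv (fun x => wignerIntegral ε u w x p) x
        - x * deriv (fun p => wignerIntegral ε u w x p) p
      = I / ε * (E₁ - E₂) * wignerIntegral ε u w x p := by
  rw [(hasDerivAt_wignerIntegral_x hu.hasDerivAt hw.hasDerivAt hu.continuous_deriv
      hw.continuous_deriv hu.decay hw.decay hu.decay_deriv hw.decay_deriv x p).deriv,
    (hasDerivAt_wignerIntegral_p hu.continuous hw.continuous hu.decay hw.decay x p).deriv]
  have ibp := wignerIntegral_integration_by_parts (ε := ε) hu hw x p
  have i₃ := integrable_wignerIntegrand (ε := ε) hu.continuous_deriv_deriv hw.continuous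
    hu.decay_deriv_deriv hw.decay x p
  have i₄ := integrable_wignerIntegrand (ε := ε) hu.continuous hw.continuous_deriv_deriv
    hu.decay hw.decay_deriv_deriv x p
  have iW := integrable_wignerIntegrand (ε := ε) hu.continuous hw.continuous hu.decay hw.decay x p
  have iM := integrable_mul_wignerIntegrand (ε := ε) hu.continuous hw.continuous hu.decay
    hw.decay x p
  have eigen : ε ^ 2 * (wignerIntegral ε u'' w x p - wignerIntegral ε u w'' x p)
      = 2 * x * (∫ y : ℝ, y * wignerIntegrand ε u w x p y)
        - 2 * (E₁ - E₂) * wignerIntegral ε u w x p := by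
    unfold wignerIntegral
    rw [← integral_sub i₃ i₄, ← integral_const_mul, ← integral_const_mul, ← integral_const_mul,
      ← integral_sub (iM.const_mul _) (iW.const_mul _)]
    exact integral_congr_ae (ae_of_all _ (sq_mul_wignerIntegrand_sub_of_eigen huE hwE x p))
  have hε' : (ε : ℂ) ≠ 0 := ofReal_ne_zero.2 hε
  field_simp
  field_simp at ibp
  linear_combination (-I * ε / 2) * ibp + (-I / 2) * eigen
    + (ε * p * (wignerIntegral ε u' w x p + wignerIntegral ε u w' x p)) * I_sq

end Moyal

theorem crossWigner_moyal {ε E₁ E₂ : ℝ} {f f' f'' g g' g'' : ℝ → ℂ} (hε : ε ≠ 0)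
    (hf : HasGaussianDecayTwoDerivs f f' f'') (hg : HasGaussianDecayTwoDerivs g g' g'')
    (hfE : ∀ t, -(ε ^ 2 / 2) * f'' t + t ^ 2 / 2 * f t = E₁ * f t)
    (hgE : ∀ t, -(ε ^ 2 / 2) * g'' t + t ^ 2 / 2 * g t = E₂ * g t) (x p : ℝ) :
    p * deriv (fun x => crossWigner ε f g x p) x - x * deriv (fun p => crossWigner ε f g x p) p
      = I / ε * (E₁ - E₂) * crossWigner ε f g x p := by
  have hgE' : ∀ t, -(ε ^ 2 / 2) * starRingEnd ℂ (g'' t) + t ^ 2 / 2 * starRingEnd ℂ (g t)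
      = E₂ * starRingEnd ℂ (g t) := fun t => by
    simpa [map_ofNat] using congrArg (starRingEnd ℂ) (hgE t)
  simp only [crossWigner_eq_wignerIntegral, deriv_const_mul_field]
  linear_combination ((2 * Real.pi * ε : ℝ) : ℂ)⁻¹ * wignerIntegral_moyal hε hf hg.conj hfE hgE' x p

noncomputable def physHermite : ℕ → ℝ[X]
  | 0 => 1
  | n + 1 => 2 * X * physHermite n - derivative (physHermite n)

theorem physHermite_succ (n : ℕ) :
    physHermite (n + 1) = 2 * X * physHermite n - derivative (physHermite n) :=
  rfl

theorem derivative_physHermite_succ (n : ℕ) :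
    derivative (physHermite (n + 1)) = 2 * ((n : ℝ[X]) + 1) * physHermite n := by
  induction n with
  | zero => simp [physHermite]
  | succ n ih =>
    rw [physHermite_succ (n + 1), derivative_sub, derivative_mul, ih, physHermite_succ n]
    simp only [derivative_mul, derivative_ofNat, derivative_X, derivative_natCast, derivative_add,
      derivative_one]
    push_cast
    ring

theorem physHermite_ode (n : ℕ) :
    derivative (derivative (physHermite n))
      = 2 * X * derivative (physHermite n) - 2 * (n : ℝ[X]) * physHermite n := by
  cases n with
  | zero => simp [physHermite]
  | succ n =>
    rw [derivative_physHermite_succ, physHermite_succ]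
    simp only [derivative_mul, derivative_ofNat, derivative_natCast, derivative_add, derivative_one]
    push_cast
    ring

theorem iteratedDeriv_exp_neg_sq (n : ℕ) (x : ℝ) :
    iteratedDeriv n (fun t : ℝ => Real.exp (-t ^ 2)) x
      = (-1) ^ n * (physHermite n).eval x * Real.exp (-x ^ 2) := by
  induction n generalizing x with
  | zero => simp [physHermite]
  | succ n ih =>
    rw [iteratedDeriv_succ, funext ih]
    have hexp : HasDerivAt (fun x : ℝ => Real.exp (-x ^ 2)) (-(2 * x) * Real.exp (-x ^ 2)) x := by
      simpa [mul_comm] using ((hasDerivAt_pow 2 x).neg).exp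
    refine ((((physHermite n).hasDerivAt x).const_mul ((-1 : ℝ) ^ n)).mul hexp).deriv.trans ?_
    simp only [physHermite_succ, eval_sub, eval_mul, eval_X, eval_ofNat, pow_succ]
    ring

theorem hermitePoly_eq_eval (n : ℕ) (x : ℝ) : hermitePoly n x = (physHermite n).eval x := by
  have hexp : Real.exp (x ^ 2) * Real.exp (-x ^ 2) = 1 := by rw [← Real.exp_add]; simp
  have hsign : ((-1 : ℝ) ^ n) ^ 2 = 1 := by rw [← pow_mul, mul_comm, pow_mul]; simp
  rw [hermitePoly, iteratedDeriv_exp_neg_sq]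
  linear_combination (((-1 : ℝ) ^ n) ^ 2 * (physHermite n).eval x) * hexp
    + (physHermite n).eval x * hsign

noncomputable def polyGaussian (ε : ℝ) (Q : ℝ[X]) (t : ℝ) : ℝ :=
  Q.eval t * Real.exp (-t ^ 2 / (2 * ε))

noncomputable def gaussianDerivative (ε : ℝ) (Q : ℝ[X]) : ℝ[X] :=
  derivative Q - C ε⁻¹ * X * Q

section PolyGaussian

variable {ε : ℝ}

theorem hasDerivAt_polyGaussian (ε : ℝ) (Q : ℝ[X]) (t : ℝ) :
    HasDerivAt (polyGaussian ε Q) (polyGaussian ε (gaussianDerivative ε Q) t) t := by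
  have hexp : HasDerivAt (fun t : ℝ => Real.exp (-t ^ 2 / (2 * ε)))
      (-(ε⁻¹ * t) * Real.exp (-t ^ 2 / (2 * ε))) t := by
    have h : HasDerivAt (fun t : ℝ => -t ^ 2 / (2 * ε)) (-(2 * t) / (2 * ε)) t := by
      simpa using (hasDerivAt_pow 2 t).neg.div_const (2 * ε)
    exact h.exp.congr_deriv (by ring)
  refine ((Q.hasDerivAt t).mul hexp).congr_deriv ?_
  simp only [polyGaussian, gaussianDerivative, eval_sub, eval_mul, eval_C, eval_X]
  ring

theorem continuous_polyGaussian (ε : ℝ) (Q : ℝ[X]) : Continuous (polyGaussian ε Q) := by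
  unfold polyGaussian
  fun_prop

theorem hasGaussianDecay_polyGaussian (hε : 0 < ε) (Q : ℝ[X]) :
    HasGaussianDecay fun t => (polyGaussian ε Q t : ℂ) := by
  obtain ⟨C, hC⟩ := Q.exists_abs_eval_mul_exp_neg_mul_sq_le (c := (4 * ε)⁻¹) (by positivity)
  refine ⟨C, (4 * ε)⁻¹, by positivity, fun t => ?_⟩
  have hsplit : Real.exp (-t ^ 2 / (2 * ε))
      = Real.exp (-(4 * ε)⁻¹ * t ^ 2) * Real.exp (-(4 * ε)⁻¹ * t ^ 2) := by
    rw [← Real.exp_add]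
    congr 1
    field_simp
    ring
  rw [norm_real, Real.norm_eq_abs, polyGaussian, abs_mul, Real.abs_exp, hsplit, ← mul_assoc]
  exact mul_le_mul_of_nonneg_right (hC t) (Real.exp_pos _).le

theorem hasGaussianDecayTwoDerivs_polyGaussian (hε : 0 < ε) (Q : ℝ[X]) :
    HasGaussianDecayTwoDerivs (fun t => (polyGaussian ε Q t : ℂ))
      (fun t => (polyGaussian ε (gaussianDerivative ε Q) t : ℂ))
      (fun t => (polyGaussian ε (gaussianDerivative ε (gaussianDerivative ε Q)) t : ℂ)) where
  hasDerivAt t := (hasDerivAt_polyGaussian ε Q t).ofReal_comp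
  hasDerivAt_deriv t := (hasDerivAt_polyGaussian ε _ t).ofReal_comp
  continuous_deriv_deriv := continuous_ofReal.comp (continuous_polyGaussian ε _)
  decay := hasGaussianDecay_polyGaussian hε Q
  decay_deriv := hasGaussianDecay_polyGaussian hε _
  decay_deriv_deriv := hasGaussianDecay_polyGaussian hε _

end PolyGaussian

noncomputable def hermiteFunPoly (ε : ℝ) (n : ℕ) : ℝ[X] :=
  C ((Real.pi * ε) ^ (-(1 / 4 : ℝ)) * ((2 : ℝ) ^ n * (n.factorial : ℝ)) ^ (-(1 / 2 : ℝ))) *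
    (physHermite n).comp (C (Real.sqrt ε)⁻¹ * X)

theorem hermiteFun_eq_polyGaussian (ε : ℝ) (n : ℕ) :
    hermiteFun ε n = polyGaussian ε (hermiteFunPoly ε n) := by
  ext t
  simp only [hermiteFun, polyGaussian, hermiteFunPoly, hermitePoly_eq_eval, eval_mul, eval_C,
    eval_comp, eval_X, div_eq_inv_mul]
  ring

theorem sq_mul_eval_gaussianDerivative_hermiteFunPoly {ε : ℝ} (hε : 0 < ε) (n : ℕ) (t : ℝ) :
    ε ^ 2 * (gaussianDerivative ε (gaussianDerivative ε (hermiteFunPoly ε n))).eval t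
      = (t ^ 2 - (2 * n + 1) * ε) * (hermiteFunPoly ε n).eval t := by
  set a := (Real.sqrt ε)⁻¹
  set c := (Real.pi * ε) ^ (-(1 / 4 : ℝ)) * ((2 : ℝ) ^ n * (n.factorial : ℝ)) ^ (-(1 / 2 : ℝ))
  have ha : ε * a ^ 2 = 1 := by
    rw [inv_pow, Real.sq_sqrt hε.le, mul_inv_cancel₀ hε.ne']
  have hinv : ε⁻¹ = a ^ 2 := by rw [← mul_eq_one_iff_inv_eq₀ hε.ne', ha]
  -- at `s = a t` the Hermite equation `H'' = 2 s H' - 2 n H` becomes the eigen-equation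
  have hode := congrArg (eval (a * t)) (physHermite_ode n)
  simp only [eval_mul, eval_sub, eval_X, eval_ofNat, eval_natCast] at hode
  simp only [gaussianDerivative, hermiteFunPoly, derivative_sub, derivative_mul, derivative_C,
    derivative_X, derivative_comp, eval_sub, eval_mul, eval_add, eval_C, eval_X, eval_comp,
    zero_mul, zero_add, mul_one, hinv]
  linear_combination (ε ^ 2 * c * a ^ 2) * hode
    + (c * (physHermite n).eval (a * t) * (t ^ 2 * (ε * a ^ 2 + 1) - (2 * n + 1) * ε)) * ha

section HermiteFun

variable {ε : ℝ}

theorem hasGaussianDecayTwoDerivs_hermiteFun (hε : 0 < ε) (n : ℕ) :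
    HasGaussianDecayTwoDerivs (fun t => (hermiteFun ε n t : ℂ))
      (fun t => (polyGaussian ε (gaussianDerivative ε (hermiteFunPoly ε n)) t : ℂ))
      (fun t => (polyGaussian ε
        (gaussianDerivative ε (gaussianDerivative ε (hermiteFunPoly ε n))) t : ℂ)) := by
  rw [hermiteFun_eq_polyGaussian]
  exact hasGaussianDecayTwoDerivs_polyGaussian hε _

theorem hermiteFun_eigen (hε : 0 < ε) (n : ℕ) (t : ℝ) :
    -(ε ^ 2 / 2) * (polyGaussian ε
        (gaussianDerivative ε (gaussianDerivative ε (hermiteFunPoly ε n))) t : ℂ)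
      + t ^ 2 / 2 * (hermiteFun ε n t : ℂ) = (((n + 1 / 2) * ε : ℝ) : ℂ) * hermiteFun ε n t := by
  have h := sq_mul_eval_gaussianDerivative_hermiteFunPoly hε n t
  have hr : -(ε ^ 2 / 2) * polyGaussian ε
        (gaussianDerivative ε (gaussianDerivative ε (hermiteFunPoly ε n))) t
      + t ^ 2 / 2 * polyGaussian ε (hermiteFunPoly ε n) t
      = (n + 1 / 2) * ε * polyGaussian ε (hermiteFunPoly ε n) t := by
    unfold polyGaussian
    linear_combination (-(1 / 2) * Real.exp (-t ^ 2 / (2 * ε))) * h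
  rw [hermiteFun_eq_polyGaussian]
  exact_mod_cast hr

end HermiteFun

/-- The cross-Wigner transform `W_{nm} = W^ε_{v_mᵋ}[v_nᵋ]` of two Hermite functions
satisfies the Moyal (sine) bracket eigenvalue equation of the harmonic oscillator:
`p ∂_x W_{nm} − x ∂_p W_{nm} = (i/ε)(E_nᵋ − E_mᵋ) W_{nm}` with `E_kᵋ = (k + 1/2)ε`. -/
theorem crossWigner_hermite_moyal_bracket_eigen (ε : ℝ) (hε : 0 < ε) (n m : ℕ) :
    ∀ x p : ℝ,
      (p : ℂ) * deriv (fun x' : ℝ =>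
          crossWigner ε (fun t => (hermiteFun ε n t : ℂ))
            (fun t => (hermiteFun ε m t : ℂ)) x' p) x
        - (x : ℂ) * deriv (fun p' : ℝ =>
            crossWigner ε (fun t => (hermiteFun ε n t : ℂ))
              (fun t => (hermiteFun ε m t : ℂ)) x p') p
      = (Complex.I / (ε : ℂ)) * ((((n : ℂ) + 1 / 2) * ε) - (((m : ℂ) + 1 / 2) * ε)) *
          crossWigner ε (fun t => (hermiteFun ε n t : ℂ))
            (fun t => (hermiteFun ε m t : ℂ)) x p := by
  intro x p
  have h := crossWigner_moyal hε.ne' (hasGaussianDecayTwoDerivs_hermiteFun hε n)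
    (hasGaussianDecayTwoDerivs_hermiteFun hε m) (hermiteFun_eigen hε n) (hermiteFun_eigen hε m) x p
  push_cast at h
  exact h
end

section
/- Bartlett–Moyal formula (diagonal case): for every ε > 0 and n ∈ ℕ, the Wigner transform of the nth semiclassical Hermite function is W^ε[v_nᵋ](x,p) = ((−1)ⁿ/(πε)) · e^{−(x² + p²)/ε} · L_n(2(x² + p²)/ε) for all (x,p) ∈ ℝ², where L_n is the nth Laguerre polynomial. -/
/-!
Up to its normalisation, `v_nᵋ` is `h_n(t) = e^{-t²/(2ε)} He_n(κt)` with `κ = √(2/ε)` and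
`He_n` the probabilists' Hermite polynomial. The substitution `y = 2u/κ` turns the
cross-Wigner transform of `h_m, h_n` into `e^{-a²/2} G(m,n)` with `a = κx`, `b = κp` and
`G(m,n) = ∫ e^{-u²/2 - ibu} He_m(a+u) He_n(a-u) du`.
Integration by parts, together with `He_{m+1} = X He_m - He_m'` and `He_n' = n He_{n-1}`,
gives `G(m+1,n) = (a - ib) G(m,n) - n G(m,n-1)`, and `u ↦ -u` exchanges `m` and `n`. Hence
`G(m,n) = √(2π) e^{-b²/2} H_{m,n}(a - ib, a + ib)` with Itô's complex Hermite polynomials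
`H_{m,n}`, and on the diagonal `H_{n,n}(z̄, z) = (-1)ⁿ n! L_n(|z|²)`.
-/

open MeasureTheory

/-- The Laguerre polynomial of degree `n` and order `a`:
`L_n^{(a)}(x) = Σ_{m=0}^{n} binom(n+a, n−m) (−x)^m / m!`. -/
noncomputable def laguerre (n a : ℕ) (x : ℝ) : ℝ :=
  ∑ m ∈ Finset.range (n + 1), ((n + a).choose (n - m) : ℝ) * (-x) ^ m / (m.factorial : ℝ)

open Polynomial Complex Real Finset
open scoped Nat ComplexConjugate

namespace Polynomial

theorem derivative_hermite (n : ℕ) : derivative (hermite n) = n * hermite (n - 1) := by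
  induction n with
  | zero => simp [hermite_zero]
  | succ n ih =>
    rw [hermite_succ, derivative_sub, derivative_mul, derivative_X, one_mul, ih]
    rcases n with _ | n
    · simp [hermite_zero]
    · rw [derivative_mul, derivative_natCast, zero_mul, zero_add, Nat.add_sub_cancel,
        Nat.add_sub_cancel, hermite_succ n]
      push_cast
      ring

end Polynomial

theorem hermitePoly_eq_aeval_hermite (n : ℕ) (x : ℝ) :
    hermitePoly n x = Real.sqrt 2 ^ n * aeval (Real.sqrt 2 * x) (hermite n) := by
  have hgauss : (fun t : ℝ => Real.exp (-t ^ 2)) =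
      fun t => (fun y : ℝ => Real.exp (-(y ^ 2 / 2))) (Real.sqrt 2 * t) := by
    ext t
    dsimp only
    rw [mul_pow, Real.sq_sqrt zero_le_two]
    ring_nf
  have hsmooth : ContDiff ℝ n (fun y : ℝ => Real.exp (-(y ^ 2 / 2))) := by fun_prop
  rw [hermitePoly, hgauss, iteratedDeriv_comp_const_mul hsmooth, iteratedDeriv_eq_iterate]
  dsimp only
  rw [deriv_gaussian_eq_hermite_mul_gaussian, mul_pow, Real.sq_sqrt zero_le_two]
  have hexp : Real.exp (x ^ 2) * Real.exp (-(2 * x ^ 2 / 2)) = 1 := by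
    rw [← Real.exp_add]; ring_nf; exact Real.exp_zero
  have hsign : ((-1 : ℝ) ^ n) ^ 2 = 1 := by rw [← pow_mul, pow_mul', neg_one_sq, one_pow]
  linear_combination (Real.sqrt 2 ^ n * aeval (Real.sqrt 2 * x) (hermite n)) *
    (((-1 : ℝ) ^ n) ^ 2 * hexp + hsign)

section ComplexHermite

variable {R : Type*} [CommRing R]

/-- Itô's complex Hermite polynomial `H_{m,n}(w, z)`, usually evaluated at `w = z̄`. -/
def complexHermite (m n : ℕ) (w z : R) : R :=
  ∑ k ∈ range (m + 1), (-1) ^ k * k ! * m.choose k * n.choose k * w ^ (m - k) * z ^ (n - k)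

theorem complexHermite_zero_left (n : ℕ) (w z : R) : complexHermite 0 n w z = z ^ n := by
  simp [complexHermite]

theorem complexHermite_succ_left (m n : ℕ) (w z : R) :
    complexHermite (m + 1) n w z =
      w * complexHermite m n w z - n * complexHermite m (n - 1) w z := by
  set t : ℕ → ℕ → R := fun l k =>
    (-1) ^ k * k ! * m.choose k * l.choose k * w ^ (m - k) * z ^ (l - k) with ht
  have hw (j : ℕ) : (m.choose (j + 1) : R) * w ^ (m - j) =
      m.choose (j + 1) * (w * w ^ (m - (j + 1))) := by
    rcases lt_or_ge m (j + 1) with hm | hm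
    · simp [Nat.choose_eq_zero_of_lt hm]
    · rw [← pow_succ']; congr 2; omega
  have hn (j : ℕ) : ((j : R) + 1) * n.choose (j + 1) = n * (n - 1).choose j := by
    rcases n with _ | n
    · simp
    · norm_cast
      rw [Nat.add_sub_cancel, Nat.add_one_mul_choose_eq, mul_comm]
  -- Pascal's rule splits the `k = j + 1` term into a term of `w * H_{m,n}` and one of
  -- `n * H_{m,n-1}`.
  have hterm (j : ℕ) : (-1) ^ (j + 1) * (j + 1)! * (m + 1).choose (j + 1) * n.choose (j + 1) *
      w ^ (m + 1 - (j + 1)) * z ^ (n - (j + 1)) = w * t n (j + 1) - n * t (n - 1) j := by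
    have hz : n - 1 - j = n - (j + 1) := by omega
    rw [Nat.choose_succ_succ', Nat.factorial_succ, Nat.add_sub_add_right, ht]
    dsimp only
    rw [hz]
    push_cast [Nat.factorial_succ]
    linear_combination (-1) ^ (j + 1) * j ! * n.choose (j + 1) * z ^ (n - (j + 1)) * (j + 1) * hw j
      + (-1) ^ (j + 1) * j ! * m.choose j * w ^ (m - j) * z ^ (n - (j + 1)) * hn j
  have hlast : t n (m + 1) = 0 := by simp [ht]
  have hsum := sum_range_succ' (t n) (m + 1)
  rw [sum_range_succ, hlast, add_zero] at hsum
  rw [complexHermite, complexHermite, complexHermite, sum_range_succ',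
    sum_congr rfl fun j _ => hterm j, sum_sub_distrib, ← mul_sum, ← mul_sum]
  change _ = w * ∑ k ∈ range (m + 1), t n k - n * ∑ k ∈ range (m + 1), t (n - 1) k
  rw [hsum]
  simp only [ht, pow_zero, Nat.factorial_zero, Nat.cast_one, mul_one, Nat.choose_zero_right,
    tsub_zero, one_mul]
  ring

theorem complexHermite_self (n : ℕ) (w z : R) :
    complexHermite n n w z =
      ∑ k ∈ range (n + 1), (-1) ^ k * k ! * (n.choose k : R) ^ 2 * (w * z) ^ (n - k) := by
  simp only [complexHermite, mul_pow]
  exact sum_congr rfl fun k _ => by ring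

end ComplexHermite

theorem neg_one_pow_mul_factorial_mul_laguerre (n : ℕ) (t : ℝ) :
    (-1) ^ n * n ! * laguerre n 0 t =
      ∑ k ∈ range (n + 1), (-1) ^ k * k ! * (n.choose k : ℝ) ^ 2 * t ^ (n - k) := by
  rw [laguerre, mul_sum, ← sum_range_reflect]
  refine sum_congr rfl fun m hm => ?_
  obtain ⟨k, rfl⟩ := Nat.exists_eq_add_of_le' (Nat.lt_succ_iff.mp (mem_range.mp hm))
  have hfact : ((k + m).choose m : ℝ) * k ! * m ! = (k + m)! := by
    exact_mod_cast Nat.add_choose_mul_factorial_mul_factorial k m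
  have hsign : (-1 : ℝ) ^ k * (-1) ^ k = 1 := by rw [← mul_pow, neg_one_mul, neg_neg, one_pow]
  rw [Nat.add_zero, Nat.add_sub_cancel, Nat.add_sub_cancel, Nat.add_sub_cancel_left,
    neg_pow t, ← hfact, pow_add]
  field_simp
  linear_combination ((k + m).choose m : ℝ) ^ 2 * t ^ k * hsign

theorem complexHermite_conj_self (n : ℕ) (z : ℂ) :
    complexHermite n n (conj z) z = ((-1) ^ n * n ! * laguerre n 0 (normSq z) : ℝ) := by
  rw [complexHermite_self, ← normSq_eq_conj_mul_self, neg_one_pow_mul_factorial_mul_laguerre]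
  push_cast
  rfl

section GaussianFunctional

theorem integrable_cexp_mul_eval (b : ℝ) (R : ℂ[X]) :
    Integrable fun u : ℝ => cexp (-(u : ℂ) ^ 2 / 2 - I * b * u) * R.eval (u : ℂ) := by
  induction R using Polynomial.induction_on' with
  | add P Q hP hQ =>
    simp only [eval_add, mul_add]
    exact hP.add hQ
  | monomial k c =>
    have hnorm (u : ℝ) :
        ‖cexp (-(u : ℂ) ^ 2 / 2 - I * b * u)‖ = Real.exp (-(1 / 2) * u ^ 2) := by
      rw [norm_exp]
      congr 1
      simp [← ofReal_pow, div_eq_inv_mul]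
    have hdom := ((integrable_rpow_mul_exp_neg_mul_sq (b := 1 / 2) (by norm_num)
      (s := k) (by linarith [k.cast_nonneg (α := ℝ)])).norm.const_mul ‖c‖)
    refine hdom.mono' (by fun_prop) (ae_of_all _ fun u => le_of_eq ?_)
    rw [norm_mul, hnorm, eval_monomial, norm_mul, norm_pow, Complex.norm_real, norm_mul,
      Real.rpow_natCast, norm_pow, Real.norm_of_nonneg (Real.exp_pos _).le]
    ring

noncomputable def gaussianFunctional (b : ℝ) : ℂ[X] →ₗ[ℂ] ℂ where
  toFun R := ∫ u : ℝ, cexp (-(u : ℂ) ^ 2 / 2 - I * b * u) * R.eval (u : ℂ)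
  map_add' P Q := by
    simp only [eval_add, mul_add]
    exact integral_add (integrable_cexp_mul_eval b P) (integrable_cexp_mul_eval b Q)
  map_smul' c R := by
    simp only [eval_smul, smul_eq_mul, RingHom.id_apply, ← integral_const_mul, mul_left_comm]

theorem gaussianFunctional_apply (b : ℝ) (R : ℂ[X]) :
    gaussianFunctional b R =
      ∫ u : ℝ, cexp (-(u : ℂ) ^ 2 / 2 - I * b * u) * R.eval (u : ℂ) :=
  rfl

theorem gaussianFunctional_derivative (b : ℝ) (R : ℂ[X]) :
    gaussianFunctional b (derivative R) = gaussianFunctional b ((X + C (I * b)) * R) := by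
  rw [← sub_eq_zero, ← map_sub, gaussianFunctional_apply]
  refine integral_eq_zero_of_hasDerivAt_of_integrable (fun u => ?_)
    (integrable_cexp_mul_eval b _) (integrable_cexp_mul_eval b R)
  have hexp : HasDerivAt (fun w : ℂ => cexp (-w ^ 2 / 2 - I * b * w))
      (cexp (-(u : ℂ) ^ 2 / 2 - I * b * u) * (-u - I * b)) (u : ℂ) := by
    refine ((((hasDerivAt_pow 2 (u : ℂ)).neg.div_const 2).sub
      ((hasDerivAt_id (u : ℂ)).const_mul (I * b))).cexp).congr_deriv ?_
    simp only [Pi.neg_apply, Pi.sub_apply, id_eq]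
    ring
  refine ((hexp.mul (R.hasDerivAt (u : ℂ))).comp_ofReal).congr_deriv ?_
  simp only [eval_sub, eval_mul, eval_add, eval_X, eval_C]
  ring

theorem gaussianFunctional_one (b : ℝ) :
    gaussianFunctional b 1 = (Real.sqrt (2 * π) * Real.exp (-b ^ 2 / 2) : ℝ) := by
  have h := integral_cexp_quadratic (b := -1 / 2) (by norm_num) (-I * b) 0
  have hpow : ((π : ℂ) / -(-1 / 2)) ^ (1 / 2 : ℂ) = (Real.sqrt (2 * π) : ℂ) := by
    rw [Real.sqrt_eq_rpow, ofReal_cpow (by positivity)]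
    push_cast
    ring_nf
  simp only [gaussianFunctional_apply, eval_one, mul_one]
  convert h using 2
  · funext u
    congr 1
    ring
  · rw [hpow, ofReal_mul, ofReal_exp]
    congr 2
    push_cast
    linear_combination -(b : ℂ) ^ 2 / 2 * I_sq

theorem gaussianFunctional_comp_neg (b : ℝ) (R : ℂ[X]) :
    gaussianFunctional (-b) (R.comp (-X)) = gaussianFunctional b R := by
  rw [gaussianFunctional_apply, gaussianFunctional_apply, ← integral_neg_eq_self]
  congr 1
  ext u
  simp only [eval_comp, eval_neg, eval_X, ofReal_neg]
  ring_nf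

end GaussianFunctional

section HermitePair

noncomputable def hermitePair (a : ℂ) (m n : ℕ) : ℂ[X] :=
  ((hermite m).map (algebraMap ℤ ℂ)).comp (C a + X) *
    ((hermite n).map (algebraMap ℤ ℂ)).comp (C a - X)

theorem hermitePair_comp_neg (a : ℂ) (m n : ℕ) :
    (hermitePair a m n).comp (-X) = hermitePair a n m := by
  simp only [hermitePair, mul_comp, comp_assoc, add_comp, sub_comp, C_comp, X_comp,
    ← sub_eq_add_neg, sub_neg_eq_add, mul_comm]

theorem derivative_hermitePair (a : ℂ) (m n : ℕ) :
    derivative (hermitePair a m n) =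
      (C a + X) * hermitePair a m n - hermitePair a (m + 1) n - n • hermitePair a m (n - 1) := by
  simp only [hermitePair, derivative_mul, derivative_comp, derivative_map, derivative_add,
    derivative_sub, derivative_C, derivative_X, derivative_hermite, hermite_succ,
    Polynomial.map_sub, Polynomial.map_mul, Polynomial.map_natCast, Polynomial.map_X, mul_comp,
    sub_comp, natCast_comp, X_comp, nsmul_eq_mul]
  ring

theorem gaussianFunctional_hermitePair_succ_left (b : ℝ) (a : ℂ) (m n : ℕ) :
    gaussianFunctional b (hermitePair a (m + 1) n) =
      (a - I * b) * gaussianFunctional b (hermitePair a m n) -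
        n * gaussianFunctional b (hermitePair a m (n - 1)) := by
  have h := gaussianFunctional_derivative b (hermitePair a m n)
  rw [derivative_hermitePair, show (C a + X) * hermitePair a m n =
    (X + C (I * b)) * hermitePair a m n + (a - I * b) • hermitePair a m n by
      rw [← C_mul', C_sub]; ring] at h
  rw [map_sub, map_sub, map_add, map_smul, map_nsmul, smul_eq_mul, nsmul_eq_mul] at h
  linear_combination -h

theorem gaussianFunctional_hermitePair_swap (b : ℝ) (a : ℂ) (m n : ℕ) :
    gaussianFunctional (-b) (hermitePair a n m) = gaussianFunctional b (hermitePair a m n) := by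
  rw [← hermitePair_comp_neg, gaussianFunctional_comp_neg]

theorem gaussianFunctional_hermitePair_zero_left (b : ℝ) (a : ℂ) (n : ℕ) :
    gaussianFunctional b (hermitePair a 0 n) =
      (Real.sqrt (2 * π) * Real.exp (-b ^ 2 / 2) : ℝ) * (a + I * b) ^ n := by
  induction n with
  | zero => simpa [hermitePair, hermite_zero] using gaussianFunctional_one b
  | succ n ih =>
    rw [← gaussianFunctional_hermitePair_swap, gaussianFunctional_hermitePair_succ_left,
      gaussianFunctional_hermitePair_swap, ih]
    push_cast
    ring

theorem gaussianFunctional_hermitePair (b : ℝ) (a : ℂ) (m n : ℕ) :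
    gaussianFunctional b (hermitePair a m n) =
      (Real.sqrt (2 * π) * Real.exp (-b ^ 2 / 2) : ℝ) *
        complexHermite m n (a - I * b) (a + I * b) := by
  induction m generalizing n with
  | zero => rw [gaussianFunctional_hermitePair_zero_left, complexHermite_zero_left]
  | succ m ih =>
    rw [gaussianFunctional_hermitePair_succ_left, ih, ih, complexHermite_succ_left]
    ring

end HermitePair

noncomputable def hermiteGaussian (ε : ℝ) (n : ℕ) (t : ℝ) : ℝ :=
  Real.exp (-t ^ 2 / (2 * ε)) * aeval (Real.sqrt (2 / ε) * t) (hermite n)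

theorem wignerIntegrand_hermiteGaussian {ε κ : ℝ} (hε : 0 < ε) (hκ : κ = Real.sqrt (2 / ε))
    (m n : ℕ) (x p u : ℝ) :
    cexp (-I * p * ((2 / κ * u : ℝ) : ℂ) / ε) *
        (hermiteGaussian ε m (x + 2 / κ * u / 2) : ℂ) *
          conj (hermiteGaussian ε n (x - 2 / κ * u / 2) : ℂ) =
      Real.exp (-(κ * x) ^ 2 / 2) * (cexp (-(u : ℂ) ^ 2 / 2 - I * (κ * p : ℝ) * u) *
        (hermitePair (κ * x : ℝ) m n).eval (u : ℂ)) := by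
  have hκ0 : κ ≠ 0 := hκ ▸ (Real.sqrt_pos.2 (by positivity)).ne'
  have hκ0' : (κ : ℂ) ≠ 0 := ofReal_ne_zero.2 hκ0
  have hε' : (ε : ℂ) = 2 / κ ^ 2 := by
    rw [hκ, ← ofReal_ofNat, ← ofReal_pow, ← ofReal_div, Real.sq_sqrt (by positivity)]
    field_simp
  have hplus : κ * (x + 2 / κ * u / 2) = κ * x + u := by field_simp
  have hminus : κ * (x - 2 / κ * u / 2) = κ * x - u := by field_simp
  have hcast (r : ℝ) (k : ℕ) :
      ((aeval r (hermite k) : ℝ) : ℂ) = aeval (r : ℂ) (hermite k) :=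
    (aeval_algebraMap_apply ℂ r (hermite k)).symm
  have hexp : cexp (-I * p * ((2 / κ * u : ℝ) : ℂ) / ε) *
        Real.exp (-(x + 2 / κ * u / 2) ^ 2 / (2 * ε)) *
          Real.exp (-(x - 2 / κ * u / 2) ^ 2 / (2 * ε)) =
      Real.exp (-(κ * x) ^ 2 / 2) * cexp (-(u : ℂ) ^ 2 / 2 - I * (κ * p : ℝ) * u) := by
    simp only [ofReal_exp, ← Complex.exp_add]
    congr 1
    push_cast
    rw [hε']
    field_simp
    ring
  rw [conj_ofReal]
  simp only [hermiteGaussian, hermitePair, eval_mul, eval_comp, eval_add, eval_sub,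
    eval_C, eval_X, eval_map_algebraMap, ← hκ, hplus, hminus, ofReal_mul, hcast]
  push_cast at hexp ⊢
  linear_combination
    aeval (↑κ * ↑x + ↑u : ℂ) (hermite m) * aeval (↑κ * ↑x - ↑u : ℂ) (hermite n) * hexp

theorem crossWigner_hermiteGaussian {ε : ℝ} (hε : 0 < ε) (m n : ℕ) (x p : ℝ) :
    crossWigner ε (fun t => (hermiteGaussian ε m t : ℂ))
        (fun t => (hermiteGaussian ε n t : ℂ)) x p =
      ((Real.sqrt (π * ε))⁻¹ * Real.exp (-(x ^ 2 + p ^ 2) / ε) : ℝ) *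
        complexHermite m n (conj (Real.sqrt (2 / ε) * (x + p * I)))
          (Real.sqrt (2 / ε) * (x + p * I)) := by
  set κ := Real.sqrt (2 / ε) with hκ_def
  have hκ : 0 < κ := Real.sqrt_pos.2 (by positivity)
  have hsubst := Measure.integral_comp_mul_left (fun y : ℝ => cexp (-I * p * y / ε) *
    (hermiteGaussian ε m (x + y / 2) : ℂ) * conj (hermiteGaussian ε n (x - y / 2) : ℂ))
    (2 / κ)
  simp_rw [wignerIntegrand_hermiteGaussian hε hκ_def] at hsubst
  rw [integral_const_mul, ← gaussianFunctional_apply, gaussianFunctional_hermitePair,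
    abs_of_pos (by positivity), real_smul, ofReal_inv,
    eq_inv_mul_iff_mul_eq₀ (by exact_mod_cast (by positivity : 2 / κ ≠ 0))] at hsubst
  have hw : ((κ * x : ℝ) : ℂ) - I * (κ * p : ℝ) = conj (κ * (x + p * I)) := by
    simp only [map_mul, map_add, conj_ofReal, conj_I]
    push_cast
    ring
  have hz : ((κ * x : ℝ) : ℂ) + I * (κ * p : ℝ) = κ * (x + p * I) := by push_cast; ring
  have hconst : (2 * π * ε)⁻¹ * (2 / κ) * (Real.exp (-(κ * x) ^ 2 / 2) *
      (Real.sqrt (2 * π) * Real.exp (-(κ * p) ^ 2 / 2))) =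
        (Real.sqrt (π * ε))⁻¹ * Real.exp (-(x ^ 2 + p ^ 2) / ε) := by
    have hκ' : κ = Real.sqrt 2 / Real.sqrt ε := Real.sqrt_div' 2 hε.le
    have hκsq : κ ^ 2 * ε = 2 := by rw [Real.sq_sqrt (by positivity)]; field_simp
    have hexp : Real.exp (-(κ * x) ^ 2 / 2) * Real.exp (-(κ * p) ^ 2 / 2) =
        Real.exp (-(x ^ 2 + p ^ 2) / ε) := by
      rw [← Real.exp_add]
      congr 1
      field_simp
      linear_combination -(x ^ 2 + p ^ 2) * hκsq
    rw [← hexp, Real.sqrt_mul zero_le_two, Real.sqrt_mul pi_pos.le, hκ']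
    field_simp
    rw [Real.sq_sqrt hε.le, Real.sq_sqrt pi_pos.le, mul_comm]
  rw [crossWigner, ← hsubst, hw, hz, ← hconst]
  push_cast
  ring

theorem crossWigner_const_mul (ε : ℝ) (c d : ℂ) (f g : ℝ → ℂ) (x p : ℝ) :
    crossWigner ε (fun t => c * f t) (fun t => d * g t) x p =
      c * conj d * crossWigner ε f g x p := by
  rw [crossWigner, crossWigner, mul_left_comm (c * conj d), ← integral_const_mul (c * conj d)]
  congr 2
  funext y
  rw [map_mul]
  ring

theorem hermiteFun_eq_mul_hermiteGaussian {ε : ℝ} (hε : 0 ≤ ε) (n : ℕ) (t : ℝ) :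
    hermiteFun ε n t = (π * ε) ^ (-(1 / 4 : ℝ)) * (2 ^ n * n ! : ℝ) ^ (-(1 / 2 : ℝ)) *
      Real.sqrt 2 ^ n * hermiteGaussian ε n t := by
  rw [hermiteFun, hermitePoly_eq_aeval_hermite, hermiteGaussian, Real.sqrt_div' 2 hε,
    div_mul_eq_mul_div, mul_div_assoc]
  ring

theorem hermite_normalization_sq {ε : ℝ} (hε : 0 < ε) (n : ℕ) :
    ((π * ε) ^ (-(1 / 4 : ℝ)) * (2 ^ n * n ! : ℝ) ^ (-(1 / 2 : ℝ)) * Real.sqrt 2 ^ n) ^ 2 =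
      (Real.sqrt (π * ε))⁻¹ / n ! := by
  rw [mul_pow, mul_pow, ← Real.rpow_natCast, ← Real.rpow_natCast (_ ^ _),
    ← Real.rpow_mul (by positivity), ← Real.rpow_mul (by positivity), ← pow_mul, pow_mul',
    Real.sq_sqrt zero_le_two, Real.sqrt_eq_rpow, ← Real.rpow_neg (by positivity)]
  norm_num
  rw [Real.rpow_neg_one]
  field_simp

/-- Bartlett–Moyal formula (diagonal case): the Wigner transform of the nth Hermite
function is `W^ε[v_nᵋ](x,p) = ((−1)ⁿ/(πε)) e^{−(x²+p²)/ε} L_n(2(x²+p²)/ε)`. -/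
theorem wigner_hermite_diagonal (ε : ℝ) (hε : 0 < ε) (n : ℕ) :
    ∀ x p : ℝ,
      crossWigner ε (fun t => (hermiteFun ε n t : ℂ))
          (fun t => (hermiteFun ε n t : ℂ)) x p
        = (((-1 : ℝ) ^ n / (Real.pi * ε) * Real.exp (-(x ^ 2 + p ^ 2) / ε) *
            laguerre n 0 (2 * (x ^ 2 + p ^ 2) / ε) : ℝ) : ℂ) := by
  intro x p
  set c : ℝ :=
    (π * ε) ^ (-(1 / 4 : ℝ)) * (2 ^ n * n ! : ℝ) ^ (-(1 / 2 : ℝ)) * Real.sqrt 2 ^ n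
  have hc : c ^ 2 = (Real.sqrt (π * ε))⁻¹ / n ! := hermite_normalization_sq hε n
  have hf : (fun t => (hermiteFun ε n t : ℂ)) = fun t => (c : ℂ) * hermiteGaussian ε n t := by
    funext t
    rw [hermiteFun_eq_mul_hermiteGaussian hε.le, ofReal_mul]
  have hnormSq : normSq (Real.sqrt (2 / ε) * (x + p * I)) = 2 * (x ^ 2 + p ^ 2) / ε := by
    rw [normSq_mul, normSq_ofReal, normSq_add_mul_I, Real.mul_self_sqrt (by positivity)]
    ring
  rw [hf, crossWigner_const_mul, crossWigner_hermiteGaussian hε, complexHermite_conj_self, hnormSq,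
    conj_ofReal, ← ofReal_mul, ← ofReal_mul, ← ofReal_mul]
  congr 1
  rw [← sq, hc]
  field_simp
  rw [Real.sq_sqrt (by positivity)]
end

section
/- Stationary points of the diagonal Wigner phase of the harmonic oscillator: let E > 0, x ∈ ℝ and p > 0 satisfy x² + p² ≤ 2E and (x² + p²)² ≥ 2E·x², and set σ₀ = (p/√(x² + p²))·√(2E − x² − p²). Then a real number σ satisfies the three conditions (x + σ)² ≤ 2E, (x − σ)² ≤ 2E, and √(2E − (x + σ)²) + √(2E − (x − σ)²) = 2p if and only if σ = σ₀ or σ = −σ₀. -/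
/-!
Squaring twice, `√a + √b = c` with `c ≥ 0` and `a, b ≥ 0` amounts to `a + b ≤ c²` and
`(c² - a - b)² = 4ab`. For `a, b = 2E - (x ± σ)²` and `c = 2p` the quartic collapses to
`σ² (x² + p²) = p² (2E - x² - p²)`, whose roots are `±σ₀`. Conversely, at `σ = ±σ₀` the side
condition `a + b ≥ 0` holds because `(x, p)` lies inside the Lagrangian circle, and
`a + b ≤ 4p²` because it lies outside the dual circles.
-/

/-- The `0 ≤ a + b` conjunct recovers `0 ≤ a` and `0 ≤ b`, since the last one forces `0 ≤ a b`. -/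
theorem Real.sqrt_add_sqrt_eq_iff {a b c : ℝ} (hc : 0 ≤ c) :
    (0 ≤ a ∧ 0 ≤ b ∧ √a + √b = c) ↔
      (0 ≤ a + b ∧ a + b ≤ c ^ 2 ∧ (c ^ 2 - a - b) ^ 2 = 4 * a * b) := by
  constructor
  · rintro ⟨ha, hb, rfl⟩
    have hcross : (√a + √b) ^ 2 - a - b = 2 * (√a * √b) := by
      nlinarith [Real.sq_sqrt ha, Real.sq_sqrt hb]
    refine ⟨add_nonneg ha hb, ?_, ?_⟩
    · nlinarith [mul_nonneg (Real.sqrt_nonneg a) (Real.sqrt_nonneg b)]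
    · rw [hcross, mul_pow, mul_pow, Real.sq_sqrt ha, Real.sq_sqrt hb]
      ring
  · rintro ⟨hsum, hle, hsq⟩
    have ha : 0 ≤ a := by nlinarith [sq_nonneg (c ^ 2 - a - b)]
    have hb : 0 ≤ b := by nlinarith [sq_nonneg (c ^ 2 - a - b)]
    have hcross : 2 * (√a * √b) = c ^ 2 - a - b := by
      refine (pow_left_inj₀ (by positivity) (by linarith) two_ne_zero).1 ?_
      rw [hsq, mul_pow, mul_pow, Real.sq_sqrt ha, Real.sq_sqrt hb]
      ring
    refine ⟨ha, hb, (pow_left_inj₀ (by positivity) hc two_ne_zero).1 ?_⟩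
    nlinarith [Real.sq_sqrt ha, Real.sq_sqrt hb]

theorem sq_mul_eq_iff_eq_or_eq_neg {σ p r s : ℝ} (hr : 0 < r) (hs : 0 ≤ s) :
    σ ^ 2 * r = p ^ 2 * s ↔ σ = p / √r * √s ∨ σ = -(p / √r * √s) := by
  rw [← sq_eq_sq_iff_eq_or_eq_neg, div_mul_eq_mul_div, div_pow, mul_pow,
    Real.sq_sqrt hr.le, Real.sq_sqrt hs, eq_div_iff hr.ne']

theorem wigner_stationary_iff_sq_mul_eq {D x p σ : ℝ} (hp : 0 < p) (hin : x ^ 2 + p ^ 2 ≤ D)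
    (hout : D * x ^ 2 ≤ (x ^ 2 + p ^ 2) ^ 2) :
    ((x + σ) ^ 2 ≤ D ∧ (x - σ) ^ 2 ≤ D ∧ √(D - (x + σ) ^ 2) + √(D - (x - σ) ^ 2) = 2 * p) ↔
      σ ^ 2 * (x ^ 2 + p ^ 2) = p ^ 2 * (D - x ^ 2 - p ^ 2) := by
  have hr : 0 < x ^ 2 + p ^ 2 := by positivity
  rw [← sub_nonneg (a := D), ← sub_nonneg (a := D), Real.sqrt_add_sqrt_eq_iff (by positivity)]
  have hdisc : ((2 * p) ^ 2 - (D - (x + σ) ^ 2) - (D - (x - σ) ^ 2)) ^ 2 -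
      4 * (D - (x + σ) ^ 2) * (D - (x - σ) ^ 2) =
        16 * (σ ^ 2 * (x ^ 2 + p ^ 2) - p ^ 2 * (D - x ^ 2 - p ^ 2)) := by ring
  constructor
  · rintro ⟨-, -, h⟩
    linarith
  · intro h
    have hsum : (D - x ^ 2 - σ ^ 2) * (x ^ 2 + p ^ 2) =
        x ^ 2 * (D - (x ^ 2 + p ^ 2)) + p ^ 2 * (x ^ 2 + p ^ 2) := by
      linear_combination -h
    have hgap : (2 * p ^ 2 - (D - x ^ 2 - σ ^ 2)) * (x ^ 2 + p ^ 2) =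
        (x ^ 2 + p ^ 2) ^ 2 - D * x ^ 2 := by
      linear_combination h
    have hsum_nonneg : 0 ≤ D - x ^ 2 - σ ^ 2 :=
      nonneg_of_mul_nonneg_left (by rw [hsum]; positivity) hr
    have hgap_nonneg : 0 ≤ 2 * p ^ 2 - (D - x ^ 2 - σ ^ 2) :=
      nonneg_of_mul_nonneg_left (by rw [hgap]; linarith) hr
    refine ⟨?_, ?_, by linarith⟩ <;> linarith

theorem diag_wigner_stationary_points_general (E x p : ℝ) (hp : 0 < p)
    (h1 : x ^ 2 + p ^ 2 ≤ 2 * E) (h2 : (x ^ 2 + p ^ 2) ^ 2 ≥ 2 * E * x ^ 2) :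
    ∀ σ : ℝ,
      ((x + σ) ^ 2 ≤ 2 * E ∧ (x - σ) ^ 2 ≤ 2 * E ∧
        Real.sqrt (2 * E - (x + σ) ^ 2) + Real.sqrt (2 * E - (x - σ) ^ 2) = 2 * p)
      ↔ (σ = p / Real.sqrt (x ^ 2 + p ^ 2) * Real.sqrt (2 * E - x ^ 2 - p ^ 2)
          ∨ σ = -(p / Real.sqrt (x ^ 2 + p ^ 2) * Real.sqrt (2 * E - x ^ 2 - p ^ 2))) := by
  intro σ
  rw [wigner_stationary_iff_sq_mul_eq hp h1 h2]
  exact sq_mul_eq_iff_eq_or_eq_neg (by positivity) (by linarith)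

/-- Stationary points of the diagonal Wigner phase of the harmonic oscillator:
for `(x,p)` with `p > 0` inside the Lagrangian circle `x² + p² ≤ 2E` and outside the
dual circles (`(x² + p²)² ≥ 2E x²`), a real number `σ` satisfies
`(x ± σ)² ≤ 2E` and `√(2E − (x+σ)²) + √(2E − (x−σ)²) = 2p` if and only if
`σ = ±σ₀`, where `σ₀ = (p/√(x²+p²)) √(2E − x² − p²)`. -/
theorem diag_wigner_stationary_points (E x p : ℝ) (hE : 0 < E) (hp : 0 < p)
    (h1 : x ^ 2 + p ^ 2 ≤ 2 * E) (h2 : (x ^ 2 + p ^ 2) ^ 2 ≥ 2 * E * x ^ 2) :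
    ∀ σ : ℝ,
      ((x + σ) ^ 2 ≤ 2 * E ∧ (x - σ) ^ 2 ≤ 2 * E ∧
        Real.sqrt (2 * E - (x + σ) ^ 2) + Real.sqrt (2 * E - (x - σ) ^ 2) = 2 * p)
      ↔ (σ = p / Real.sqrt (x ^ 2 + p ^ 2) * Real.sqrt (2 * E - x ^ 2 - p ^ 2)
          ∨ σ = -(p / Real.sqrt (x ^ 2 + p ^ 2) * Real.sqrt (2 * E - x ^ 2 - p ^ 2))) :=
  diag_wigner_stationary_points_general E x p hp h1 h2
end
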